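/- arXiv:2112.02431 — 13 statements merged into one kernel-verified Lean document; each statement's English description precedes it below -/
import Mathlib

section
/- Let V be an infinite-dimensional vector space over a field F, and let α be an infinite cardinal with α ≤ dim_F V. Let I_α be the two-sided ideal of End_F(V) consisting of all linear maps φ with dim_F φ(V) < α. Then the quotient algebra End_F(V)/I_α is a prime associative algebra. -/
open Cardinal

/-- The quotient `End F V / I_α` is a prime algebra: elementwise, for `a, b ∉ I_α` there is
`x` with `a * x * b ∉ I_α`. -/
theorem quotient_rankIdeal_prime (F V : Type*) [Field F] [AddCommGroup V] [Module F V]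
    (hV : ℵ₀ ≤ Module.rank F V) (α : Cardinal) (hα : ℵ₀ ≤ α) (hα' : α ≤ Module.rank F V)
    (a b : Module.End F V) (ha : ¬ LinearMap.rank a < α) (hb : ¬ LinearMap.rank b < α) :
    ∃ x : Module.End F V, ¬ LinearMap.rank (a * x * b) < α := by
  classical
  rw [not_lt] at ha hb
  -- index type of cardinality α
  set ι := Quotient.out α with hι
  have hmkι : #ι = α := Cardinal.mk_out α
  -- basis of range a
  let ba := Module.Basis.ofVectorSpace F (LinearMap.range a)
  let bb := Module.Basis.ofVectorSpace F (LinearMap.range b)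
  have hka : α ≤ #(Module.Basis.ofVectorSpaceIndex F (LinearMap.range a)) := by
    rw [ba.mk_eq_rank'']; exact ha
  have hkb : α ≤ #(Module.Basis.ofVectorSpaceIndex F (LinearMap.range b)) := by
    rw [bb.mk_eq_rank'']; exact hb
  obtain ⟨ψ⟩ : Nonempty (ι ↪ Module.Basis.ofVectorSpaceIndex F (LinearMap.range a)) := by
    rw [← hmkι] at hka; exact Cardinal.le_def _ _ |>.mp hka
  obtain ⟨φ⟩ : Nonempty (ι ↪ Module.Basis.ofVectorSpaceIndex F (LinearMap.range b)) := by
    rw [← hmkι] at hkb; exact Cardinal.le_def _ _ |>.mp hkb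
  -- preimages under a of the basis of range a
  have hva : ∀ k, ∃ v : V, a v = (ba k : V) := fun k => (ba k).2
  choose v hv using hva
  -- preimages under b of the basis of range b
  have hub : ∀ k, ∃ u : V, b u = (bb k : V) := fun k => (bb k).2
  choose u hu using hub
  -- function on basis indices of range b
  let t : Module.Basis.ofVectorSpaceIndex F (LinearMap.range b) → V := fun j =>
    if h : ∃ i : ι, φ i = j then v (ψ h.choose) else 0
  have ht : ∀ i : ι, t (φ i) = v (ψ i) := by
    intro i
    have h : ∃ i' : ι, φ i' = φ i := ⟨i, rfl⟩
    have : h.choose = i := φ.injective h.choose_spec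
    simp only [t, dif_pos h, this]
  -- projection onto range b
  obtain ⟨q, hq⟩ := Submodule.exists_isCompl (LinearMap.range b)
  let π := (LinearMap.range b).linearProjOfIsCompl q hq
  let g : (LinearMap.range b) →ₗ[F] V := bb.constr F t
  let x : Module.End F V := g ∘ₗ π
  refine ⟨x, not_lt.mpr ?_⟩
  -- key computation
  have key : ∀ i : ι, (a * x * b) (u (φ i)) = (ba (ψ i) : V) := by
    intro i
    have h1 : (a * x * b) (u (φ i)) = a (x (b (u (φ i)))) := rfl
    rw [h1, hu]
    have h2 : x ((bb (φ i) : V)) = g (bb (φ i)) := by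
      simp only [x, LinearMap.comp_apply]
      congr 1
      exact Submodule.linearProjOfIsCompl_apply_left hq (bb (φ i))
    rw [h2]
    have h3 : g (bb (φ i)) = t (φ i) := bb.constr_basis F t (φ i)
    rw [h3, ht, hv]
  -- the family i ↦ (a*x*b)(u (φ i)) is linearly independent
  have hindep : LinearIndependent F (fun i : ι => (a * x * b) (u (φ i))) := by
    have h1 : LinearIndependent F (fun k => (ba k : V)) :=
      (ba.linearIndependent).map' (LinearMap.range a).subtype
        (Submodule.ker_subtype _)
    have h2 : LinearIndependent F (fun i : ι => (ba (ψ i) : V)) :=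
      h1.comp ψ ψ.injective
    have : (fun i : ι => (a * x * b) (u (φ i))) = fun i : ι => (ba (ψ i) : V) := funext key
    rw [this]
    exact h2
  -- these lie in the range of a*x*b, giving the rank bound
  have hmem : ∀ i : ι, (a * x * b) (u (φ i)) ∈ LinearMap.range (a * x * b) := fun i =>
    LinearMap.mem_range_self _ _
  have hindep' : LinearIndependent F
      (fun i : ι => (⟨(a * x * b) (u (φ i)), hmem i⟩ :
        LinearMap.range (a * x * b))) := by
    apply LinearIndependent.of_comp (LinearMap.range (a * x * b)).subtype
    exact hindep
  calc α = #ι := hmkι.symm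
    _ ≤ Module.rank F (LinearMap.range (a * x * b)) := hindep'.cardinal_le_rank
    _ = LinearMap.rank (a * x * b) := rfl
end

section
/- Let V be an infinite-dimensional vector space over a field F, α an infinite cardinal with α ≤ dim_F V, and z ∈ End_F(V) with z ∉ I_α. If the commutator [z, a] = za − az lies in I_α for all a ∈ End_F(V), then dim_F(ker z) < α. -/
/-!
Suppose `dim (ker z) ≥ α` and `rank z ≥ α`. Then there is a linear map from `range z` to
`ker z` of rank `≥ α`; extending it to all of `V` gives an endomorphism `a` with values in
`ker z`. Hence `z * a = 0`, so `[z, a] = -(a * z)`, whose range is the image of `range z`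
under `a` and has dimension `≥ α`.
-/

open Cardinal

section

universe u

variable {K : Type*} {V W : Type u} [DivisionRing K] [AddCommGroup V] [Module K V]
  [AddCommGroup W] [Module K W]

theorem LinearMap.exists_le_rank {κ : Cardinal} (hV : κ ≤ Module.rank K V)
    (hW : κ ≤ Module.rank K W) : ∃ f : V →ₗ[K] W, κ ≤ f.rank := by
  rcases le_total (Module.rank K V) (Module.rank K W) with h | h
  · obtain ⟨f, hf⟩ := rank_le_iff_exists_linearMap.mp h
    exact ⟨f, by rwa [LinearMap.rank, rank_range_of_injective f hf]⟩
  · obtain ⟨g, hg⟩ := rank_le_iff_exists_linearMap.mp h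
    obtain ⟨f, hfg⟩ := g.exists_leftInverse_of_injective (LinearMap.ker_eq_bot.mpr hg)
    have hf : Function.Surjective f := fun w => ⟨g w, LinearMap.congr_fun hfg w⟩
    exact ⟨f, by rwa [LinearMap.rank, rank_range_of_surjective f hf]⟩

theorem LinearMap.rank_comp_of_injective {U : Type*} [AddCommGroup U] [Module K U]
    (f : U →ₗ[K] V) {i : V →ₗ[K] W} (hi : Function.Injective i) : (i ∘ₗ f).rank = f.rank := by
  rw [LinearMap.rank, LinearMap.range_comp, rank_map_eq hi]

theorem LinearMap.rank_neg {U U' : Type*} [AddCommGroup U] [Module K U] [AddCommGroup U']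
    [Module K U'] (f : U →ₗ[K] U') :
    (-f).rank = f.rank := by
  rw [LinearMap.rank, LinearMap.range_neg]

theorem Module.End.exists_mul_eq_zero_le_rank_mul {κ : Cardinal} (z : Module.End K V)
    (hrange : κ ≤ z.rank) (hker : κ ≤ Module.rank K (LinearMap.ker z)) :
    ∃ a : Module.End K V, z * a = 0 ∧ κ ≤ (a * z).rank := by
  obtain ⟨f, hf⟩ := LinearMap.exists_le_rank hrange hker
  obtain ⟨g, hgf⟩ := f.exists_extend
  refine ⟨(LinearMap.ker z).subtype ∘ₗ g, ?_, ?_⟩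
  · ext v
    exact (g v).2
  · have hfactor : (LinearMap.ker z).subtype ∘ₗ g * z
        = (LinearMap.ker z).subtype ∘ₗ f ∘ₗ z.rangeRestrict := by
      rw [← hgf]
      rfl
    rw [hfactor, LinearMap.rank_comp_of_injective _ (Submodule.subtype_injective _),
      LinearMap.rank, LinearMap.range_comp_of_range_eq_top _ z.range_rangeRestrict]
    exact hf

end

theorem ker_small_of_central_mod_rankIdeal_general (F V : Type*) [Field F] [AddCommGroup V] [Module F V]
    (α : Cardinal)
    (z : Module.End F V) (hz : ¬ LinearMap.rank z < α)
    (hcomm : ∀ a : Module.End F V, LinearMap.rank (z * a - a * z) < α) :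
    Module.rank F (LinearMap.ker z) < α := by
  by_contra! hker
  obtain ⟨a, hza, hrank⟩ := z.exists_mul_eq_zero_le_rank_mul (not_lt.mp hz) hker
  have hsmall := hcomm a
  rw [hza, zero_sub, LinearMap.rank_neg] at hsmall
  exact hsmall.not_ge hrank

/-- If `z ∉ I_α` but all commutators `[z, a]` lie in `I_α`, then `dim (ker z) < α`. -/
theorem ker_small_of_central_mod_rankIdeal (F V : Type*) [Field F] [AddCommGroup V] [Module F V]
    (hV : ℵ₀ ≤ Module.rank F V) (α : Cardinal) (hα : ℵ₀ ≤ α) (hα' : α ≤ Module.rank F V)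
    (z : Module.End F V) (hz : ¬ LinearMap.rank z < α)
    (hcomm : ∀ a : Module.End F V, LinearMap.rank (z * a - a * z) < α) :
    Module.rank F (LinearMap.ker z) < α :=
  ker_small_of_central_mod_rankIdeal_general F V α z hz hcomm
end

section
/- Let V be an infinite-dimensional vector space over a field F, α an infinite cardinal with α ≤ dim_F V, and z ∈ End_F(V) such that [z, a] ∈ I_α for all a ∈ End_F(V) and dim_F(ker z) < α. If W is a subspace of V with W ∩ z(W) = (0), then dim_F W < α. -/
/-!
Split `W` as `W₀ ⊕ (W ∩ ker z)`. Then `z` is injective on `W₀` and `W₀ ∩ z(W₀) = 0`, so some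
endomorphism `a` kills `W₀` and inverts `z` on `z(W₀)`; the commutator `[z, a]` is `-1` on `W₀`,
whence `dim W₀ ≤ rank [z, a] < α` and `dim W ≤ dim W₀ + dim (ker z) < α`.
-/

open Cardinal

namespace Submodule

variable {F V : Type*} [Field F] [AddCommGroup V] [Module F V]

theorem exists_le_disjoint_rank_le_add (W K : Submodule F V) :
    ∃ W₀ ≤ W, Disjoint W₀ K ∧ Module.rank F W ≤ Module.rank F W₀ + Module.rank F K := by
  obtain ⟨T, hT⟩ := exists_isCompl (W ⊓ K)
  refine ⟨W ⊓ T, inf_le_left, ?_, ?_⟩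
  · rw [disjoint_iff, inf_right_comm, hT.inf_eq_bot]
  · have hsup : W ⊓ T ⊔ W ⊓ K = W := by
      rw [inf_sup_assoc_of_le T inf_le_left, sup_comm, hT.sup_eq_top, inf_top_eq]
    calc Module.rank F W = Module.rank F ↥(W ⊓ T ⊔ W ⊓ K) := by rw [hsup]
      _ ≤ Module.rank F ↥(W ⊓ T) + Module.rank F ↥(W ⊓ K) := rank_add_le_rank_add_rank _ _
      _ ≤ Module.rank F ↥(W ⊓ T) + Module.rank F K := by
          gcongr; exact rank_mono inf_le_right

end Submodule

namespace Module.End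

variable {F V : Type*} [Field F] [AddCommGroup V] [Module F V]

/-- `a` is read off a left inverse of `(u, v) ↦ u + z v : W × W → V`, which is injective by the
two disjointness hypotheses. -/
theorem exists_map_eq_zero_and_map_apply_eq (z : Module.End F V) {W : Submodule F V}
    (hW : Disjoint W (W.map z)) (hker : Disjoint W (LinearMap.ker z)) :
    ∃ a : Module.End F V, (∀ w ∈ W, a w = 0) ∧ ∀ w ∈ W, a (z w) = w := by
  set φ : W × W →ₗ[F] V := W.subtype.coprod (z ∘ₗ W.subtype)
  have hφ : LinearMap.ker φ = ⊥ := by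
    refine LinearMap.ker_eq_bot'.mpr fun ⟨u, v⟩ huv => ?_
    have hu : (u : V) = -z v := eq_neg_of_add_eq_zero_left huv
    have hu0 : (u : V) = 0 :=
      (Submodule.disjoint_def.mp hW) u u.2 (hu ▸ neg_mem ⟨v, v.2, rfl⟩)
    have hv0 : (v : V) = 0 :=
      (Submodule.disjoint_def.mp hker) v v.2 (by simpa [hu0] using hu.symm)
    simp only [Prod.mk_eq_zero]
    exact ⟨Subtype.ext hu0, Subtype.ext hv0⟩
  obtain ⟨g, hg⟩ := φ.exists_leftInverse_of_injective hφ
  refine ⟨W.subtype ∘ₗ LinearMap.snd F W W ∘ₗ g, fun w hw => ?_, fun w hw => ?_⟩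
  · have : g w = (⟨w, hw⟩, 0) := by simpa [φ] using LinearMap.congr_fun hg (⟨w, hw⟩, 0)
    simp [this]
  · have : g (z w) = (0, ⟨w, hw⟩) := by simpa [φ] using LinearMap.congr_fun hg (0, ⟨w, hw⟩)
    simp [this]

theorem exists_le_range_commutator (z : Module.End F V) {W : Submodule F V}
    (hW : Disjoint W (W.map z)) (hker : Disjoint W (LinearMap.ker z)) :
    ∃ a : Module.End F V, W ≤ LinearMap.range (z * a - a * z) := by
  obtain ⟨a, ha₀, ha⟩ := exists_map_eq_zero_and_map_apply_eq z hW hker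
  refine ⟨a, fun w hw => ⟨-w, ?_⟩⟩
  simp [ha₀ w hw, ha w hw]

end Module.End

theorem small_of_disjoint_image_general (F V : Type*) [Field F] [AddCommGroup V] [Module F V]
    (α : Cardinal) (hα : ℵ₀ ≤ α)
    (z : Module.End F V)
    (hcomm : ∀ a : Module.End F V, LinearMap.rank (z * a - a * z) < α)
    (hker : Module.rank F (LinearMap.ker z) < α)
    (W : Submodule F V) (hW : W ⊓ W.map z = ⊥) :
    Module.rank F W < α := by
  obtain ⟨W₀, hW₀W, hW₀ker, hrank⟩ := W.exists_le_disjoint_rank_le_add (LinearMap.ker z)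
  have hW₀ : Disjoint W₀ (W₀.map z) :=
    disjoint_iff.mpr (le_bot_iff.mp (hW ▸ inf_le_inf hW₀W (Submodule.map_mono hW₀W)))
  obtain ⟨a, ha⟩ := z.exists_le_range_commutator hW₀ hW₀ker
  have hW₀rank : Module.rank F W₀ < α := (Submodule.rank_mono ha).trans_lt (hcomm a)
  exact hrank.trans_lt (add_lt_of_lt hα hW₀rank hker)

/-- If all commutators `[z, a]` lie in `I_α` and `dim (ker z) < α`, then any subspace `W`
with `W ∩ z(W) = 0` satisfies `dim W < α`. -/
theorem small_of_disjoint_image (F V : Type*) [Field F] [AddCommGroup V] [Module F V]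
    (hV : ℵ₀ ≤ Module.rank F V) (α : Cardinal) (hα : ℵ₀ ≤ α) (hα' : α ≤ Module.rank F V)
    (z : Module.End F V)
    (hcomm : ∀ a : Module.End F V, LinearMap.rank (z * a - a * z) < α)
    (hker : Module.rank F (LinearMap.ker z) < α)
    (W : Submodule F V) (hW : W ⊓ W.map z = ⊥) :
    Module.rank F W < α :=
  small_of_disjoint_image_general F V α hα z hcomm hker W hW
end

section
/- Let V be an infinite-dimensional vector space over a field F and α an infinite cardinal with α ≤ dim_F V. The center of the quotient algebra End_F(V)/I_α equals (F·Id_V + I_α)/I_α. Equivalently: if z ∈ End_F(V) satisfies [z, a] ∈ I_α for all a ∈ End_F(V), then there exists t ∈ F such that z − t·Id_V ∈ I_α. -/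
/-!
If `z - t` has rank `< α`, so does `[z, a] = [z - t, a]`. Conversely, Zorn gives a maximal `s`
such that the vectors `x`, `z x` (`x ∈ s`) are jointly linearly independent. Sending `z x ↦ x`
and `x ↦ 0` defines `a` with `[z, a] x = -x` on `s`, so `#s < α`. Maximality says that every
`v` has `z v ∈ F v + W` with `W = U + z U`, `U = span (s ∪ z s)`, a subspace of dimension `< α`;
then every vector of `V / W` is an eigenvector of the map induced by `z`, which is therefore a
scalar `t`, and the range of `z - t` lies in `W`.
-/

open Cardinal

theorem LinearIndependent.exists_linearMap_apply_eq {F V W ι : Type*} [Field F]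
    [AddCommGroup V] [Module F V] [AddCommGroup W] [Module F W]
    {v : ι → V} (hv : LinearIndependent F v) (g : ι → W) :
    ∃ a : V →ₗ[F] W, ∀ i, a (v i) = g i := by
  obtain ⟨a, ha⟩ := LinearMap.exists_extend (Finsupp.linearCombination F g ∘ₗ hv.repr)
  refine ⟨a, fun i => ?_⟩
  simpa [hv.repr_eq_single i] using congr($ha ⟨v i, Submodule.subset_span ⟨i, rfl⟩⟩)

namespace Module.End

variable {F V : Type*} [Field F] [AddCommGroup V] [Module F V]

theorem rank_commutator_le (f a : Module.End F V) :
    LinearMap.rank (f * a - a * f) ≤ LinearMap.rank f + LinearMap.rank f := by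
  calc LinearMap.rank (f * a - a * f)
      ≤ LinearMap.rank (f * a) + LinearMap.rank (-(a * f)) := by
        rw [sub_eq_add_neg]; exact LinearMap.rank_add_le _ _
    _ = LinearMap.rank (f * a) + LinearMap.rank (a * f) := by
        congr 1
        exact congrArg (fun p : Submodule F V => Module.rank F p) (LinearMap.range_neg _)
    _ ≤ LinearMap.rank f + LinearMap.rank f :=
        add_le_add (LinearMap.rank_comp_le_left a f) (LinearMap.rank_comp_le_right f a)

theorem commutator_sub_smul_one (z a : Module.End F V) (t : F) :
    (z - t • 1) * a - a * (z - t • 1) = z * a - a * z := by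
  simp only [sub_mul, mul_sub, smul_mul_assoc, mul_smul_comm, one_mul, mul_one]
  abel

theorem exists_sub_smul_mem_of_forall_mem_span_singleton_sup (z : Module.End F V)
    (W : Submodule F V) (h : ∀ v, z v ∈ Submodule.span F {v} ⊔ W) :
    ∃ t : F, ∀ v, z v - t • v ∈ W := by
  have hW : W ≤ W.comap z := fun w hw => by
    simpa [Submodule.span_le.mpr (Set.singleton_subset_iff.mpr hw)] using h w
  obtain ⟨t, ht⟩ := LinearMap.exists_eq_smul_id_of_forall_notLinearIndependent
    (f := W.mapQ W z hW) <| by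
    intro q hind
    obtain ⟨v, rfl⟩ := W.mkQ_surjective q
    obtain ⟨y, hy, w, hw, hzv⟩ := Submodule.mem_sup.mp (h v)
    obtain ⟨c, rfl⟩ := Submodule.mem_span_singleton.mp hy
    have hmk : W.mapQ W z hW (W.mkQ v) = c • W.mkQ v := by
      simp [← hzv, (Submodule.Quotient.mk_eq_zero W).mpr hw]
    have hc := LinearIndependent.pair_iff.mp hind c (-1) (by rw [hmk]; simp)
    exact neg_ne_zero.mpr one_ne_zero hc.2
  refine ⟨t, fun v => (Submodule.Quotient.eq W).mp ?_⟩
  simpa using congr($ht (W.mkQ v))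

/-- The family `inl x ↦ x`, `inr x ↦ z x` over `s ⊕ s` is linearly independent: besides the
independence of `s ∪ z '' s`, this makes `z` injective on `s` and `z '' s` disjoint from `s`. -/
def LinearIndepWithImage (z : Module.End F V) (s : Set V) : Prop :=
  LinearIndepOn F (Sum.elim id z) (Sum.elim id id ⁻¹' s)

theorem image_sumElim_preimage (z : Module.End F V) (s : Set V) :
    Sum.elim id z '' (Sum.elim id id ⁻¹' s) = s ∪ z '' s := by
  ext x
  simp

namespace LinearIndepWithImage

variable {z : Module.End F V}

theorem linearIndepOn_id {s : Set V} (hs : z.LinearIndepWithImage s) : LinearIndepOn F id s :=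
  (hs.mono (t := Sum.inl '' s) (by rintro _ ⟨x, hx, rfl⟩; exact hx)).comp_of_image
    Sum.inl_injective.injOn

theorem sUnion {c : Set (Set V)} (hc : IsChain (· ⊆ ·) c)
    (h : ∀ s ∈ c, z.LinearIndepWithImage s) : z.LinearIndepWithImage (⋃₀ c) := by
  rw [LinearIndepWithImage, Set.preimage_sUnion]
  exact linearIndepOn_biUnion_of_directed
    (hc.directedOn.mono fun _ _ hst => Set.preimage_mono hst) h

theorem insert {s : Set V} (hs : z.LinearIndepWithImage s) {v : V}
    (hv : v ∉ Submodule.span F (s ∪ z '' s))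
    (hzv : z v ∉ Submodule.span F {v} ⊔ Submodule.span F (s ∪ z '' s)) :
    z.LinearIndepWithImage (Insert.insert v s) := by
  have hpre : Sum.elim id id ⁻¹' Insert.insert v s =
      Insert.insert (Sum.inr v) (Insert.insert (Sum.inl v) (Sum.elim id id ⁻¹' s)) := by
    ext (x | x) <;> simp
  rw [LinearIndepWithImage, hpre]
  refine LinearIndepOn.insert (LinearIndepOn.insert hs ?_) ?_
  · simpa [image_sumElim_preimage] using hv
  · simpa [Set.image_insert_eq, image_sumElim_preimage, Submodule.span_insert] using hzv

theorem exists_apply_eq_zero_and_apply_apply_eq {s : Set V} (hs : z.LinearIndepWithImage s) :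
    ∃ a : Module.End F V, ∀ x ∈ s, a x = 0 ∧ a (z x) = x := by
  obtain ⟨a, ha⟩ := LinearIndependent.exists_linearMap_apply_eq hs
    (fun p => Sum.elim 0 id (p : V ⊕ V))
  exact ⟨a, fun x hx => ⟨ha ⟨Sum.inl x, hx⟩, ha ⟨Sum.inr x, hx⟩⟩⟩

theorem exists_cardinalMk_le_rank_commutator {s : Set V} (hs : z.LinearIndepWithImage s) :
    ∃ a : Module.End F V, #s ≤ LinearMap.rank (z * a - a * z) := by
  obtain ⟨a, ha⟩ := hs.exists_apply_eq_zero_and_apply_apply_eq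
  refine ⟨a, ?_⟩
  have hsub : s ⊆ LinearMap.range (z * a - a * z) := fun x hx =>
    ⟨-x, by simp [(ha x hx).1, (ha x hx).2]⟩
  calc #s = Module.rank F (Submodule.span F s) := (rank_span_set hs.linearIndepOn_id).symm
    _ ≤ _ := Submodule.rank_mono (Submodule.span_le.mpr hsub)

theorem mem_span_singleton_sup_of_maximal {s : Set V} (hs : Maximal z.LinearIndepWithImage s)
    (v : V) : z v ∈ Submodule.span F {v} ⊔
      (Submodule.span F (s ∪ z '' s) ⊔ (Submodule.span F (s ∪ z '' s)).map z) := by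
  set U := Submodule.span F (s ∪ z '' s)
  by_contra hzv
  have hvU : v ∉ U := fun hv =>
    hzv (Submodule.mem_sup_right (Submodule.mem_sup_right ⟨v, hv, rfl⟩))
  have hzvU : z v ∉ Submodule.span F {v} ⊔ U := fun h =>
    hzv (sup_le_sup_left (le_sup_left : U ≤ U ⊔ U.map z) _ h)
  have hvs : v ∈ s := hs.mem_of_prop_insert (hs.prop.insert hvU hzvU)
  exact hvU (Submodule.subset_span (Or.inl hvs))

end LinearIndepWithImage

theorem rank_sup_map_lt {α : Cardinal} (hα : ℵ₀ ≤ α) (z : Module.End F V) {U : Submodule F V}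
    (hU : Module.rank F U < α) : Module.rank F ↥(U ⊔ U.map z) < α :=
  calc Module.rank F ↥(U ⊔ U.map z) ≤ Module.rank F U + Module.rank F ↥(U.map z) :=
        Submodule.rank_add_le_rank_add_rank _ _
    _ ≤ Module.rank F U + Module.rank F U := add_le_add_right (rank_map_le _ _) _
    _ < α := add_lt_of_lt hα hU hU

end Module.End

theorem center_of_quotient_rankIdeal_general (F V : Type*) [Field F] [AddCommGroup V] [Module F V]
    (α : Cardinal) (hα : ℵ₀ ≤ α)
    (z : Module.End F V) :
    (∀ a : Module.End F V, LinearMap.rank (z * a - a * z) < α) ↔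
      ∃ t : F, LinearMap.rank (z - t • (1 : Module.End F V)) < α := by
  refine ⟨fun h => ?_, fun ⟨t, ht⟩ a => ?_⟩
  · obtain ⟨s, hs⟩ := zorn_subset {s | z.LinearIndepWithImage s} fun c hcS hc =>
      ⟨⋃₀ c, Module.End.LinearIndepWithImage.sUnion hc hcS, fun _ => Set.subset_sUnion_of_mem⟩
    have hsα : #s < α := by
      obtain ⟨a, ha⟩ := hs.prop.exists_cardinalMk_le_rank_commutator
      exact ha.trans_lt (h a)
    set U := Submodule.span F (s ∪ z '' s)
    have hU : Module.rank F U < α :=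
      (rank_span_le _).trans_lt <| (mk_union_le _ _).trans_lt <|
        add_lt_of_lt hα hsα (mk_image_le.trans_lt hsα)
    obtain ⟨t, ht⟩ := z.exists_sub_smul_mem_of_forall_mem_span_singleton_sup _
      (Module.End.LinearIndepWithImage.mem_span_singleton_sup_of_maximal hs)
    have hrange : LinearMap.range (z - t • 1) ≤ U ⊔ U.map z := by
      rintro _ ⟨v, rfl⟩
      simpa only [LinearMap.sub_apply, LinearMap.smul_apply, Module.End.one_apply] using ht v
    exact ⟨t, (Submodule.rank_mono hrange).trans_lt (Module.End.rank_sup_map_lt hα z hU)⟩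
  · rw [← z.commutator_sub_smul_one a t]
    exact (Module.End.rank_commutator_le _ a).trans_lt (add_lt_of_lt hα ht ht)

/-- The center of `End F V / I_α` is `(F·Id + I_α)/I_α`: all commutators `[z, a]` lie in `I_α`
iff `z - t·Id ∈ I_α` for some scalar `t`. -/
theorem center_of_quotient_rankIdeal (F V : Type*) [Field F] [AddCommGroup V] [Module F V]
    (hV : ℵ₀ ≤ Module.rank F V) (α : Cardinal) (hα : ℵ₀ ≤ α) (hα' : α ≤ Module.rank F V)
    (z : Module.End F V) :
    (∀ a : Module.End F V, LinearMap.rank (z * a - a * z) < α) ↔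
      ∃ t : F, LinearMap.rank (z - t • (1 : Module.End F V)) < α :=
  center_of_quotient_rankIdeal_general F V α hα z
end

section
/- Let V be an infinite-dimensional vector space over a field F, z ∈ End_F(V), and α an infinite cardinal ≤ dim_F V. Suppose W is a subspace of V maximal with respect to the property W ∩ z(W) = (0). Then for every v ∈ V not in W ⊕ z(W), there exists a scalar t_v ∈ F with z(v) ≡ t_v·v modulo the subspace W + z(W). -/
open Cardinal

/-- If `W` is maximal among subspaces with `W ∩ z(W) = 0`, then every `v ∉ W ⊕ z(W)` satisfies
`z v ≡ t_v • v` modulo `W + z(W)` for some scalar `t_v`. -/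
theorem eigen_mod_maximal_subspace (F V : Type*) [Field F] [AddCommGroup V] [Module F V]
    (hV : ℵ₀ ≤ Module.rank F V) (α : Cardinal) (hα : ℵ₀ ≤ α) (hα' : α ≤ Module.rank F V)
    (z : Module.End F V) (W : Submodule F V) (hW : W ⊓ W.map z = ⊥)
    (hmax : ∀ W' : Submodule F V, W < W' → W' ⊓ W'.map z ≠ ⊥) :
    ∀ v : V, v ∉ W ⊔ W.map z → ∃ t : F, z v - t • v ∈ W ⊔ W.map z := by
  intro v hv
  have hvW : v ∉ W := fun h => hv (Submodule.mem_sup_left h)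
  set W' : Submodule F V := W ⊔ F ∙ v with hW'def
  have hlt : W < W' := by
    refine lt_of_le_of_ne le_sup_left ?_
    intro h
    exact hvW (h ▸ Submodule.mem_sup_right (Submodule.mem_span_singleton_self v))
  obtain ⟨x, hx, hx0⟩ := Submodule.exists_mem_ne_zero_of_ne_bot (hmax W' hlt)
  obtain ⟨hx1, hx2⟩ := Submodule.mem_inf.mp hx
  obtain ⟨y, hy, rfl⟩ := Submodule.mem_map.mp hx2
  obtain ⟨w, hw, s, hs, hws⟩ := Submodule.mem_sup.mp hx1
  obtain ⟨a, rfl⟩ := Submodule.mem_span_singleton.mp hs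
  obtain ⟨w', hw', s', hs', hws'⟩ := Submodule.mem_sup.mp hy
  obtain ⟨b, rfl⟩ := Submodule.mem_span_singleton.mp hs'
  -- z y = w + a • v, with y = w' + b • v
  by_cases hb : b = 0
  · exfalso
    subst hb
    simp only [zero_smul, add_zero] at hws'
    subst hws'
    by_cases ha : a = 0
    · subst ha
      simp only [zero_smul, add_zero] at hws
      apply hx0
      have : z w' ∈ W ⊓ W.map z := Submodule.mem_inf.mpr
        ⟨hws ▸ hw, Submodule.mem_map_of_mem hw'⟩
      simpa [hW] using this
    · apply hv
      have : v = a⁻¹ • (z w' - w) := by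
        rw [← hws]
        rw [add_sub_cancel_left, smul_smul, inv_mul_cancel₀ ha, one_smul]
      rw [this]
      exact Submodule.smul_mem _ _ (Submodule.sub_mem _
        (Submodule.mem_sup_right (Submodule.mem_map_of_mem hw'))
        (Submodule.mem_sup_left hw))
  · refine ⟨a * b⁻¹, ?_⟩
    have hz : z (w' + b • v) = w + a • v := by rw [hws', hws]
    have hzv : z v = b⁻¹ • (w + a • v - z w') := by
      have : b • z v = w + a • v - z w' := by
        rw [← hz]; simp [map_add, map_smul]
      rw [← this, smul_smul, inv_mul_cancel₀ hb, one_smul]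
    have : z v - (a * b⁻¹) • v = b⁻¹ • w - b⁻¹ • z w' := by
      rw [hzv]; simp [smul_sub, smul_add, smul_smul]; ring_nf; abel
    rw [this]
    exact Submodule.sub_mem _
      (Submodule.mem_sup_left (Submodule.smul_mem _ _ hw))
      (Submodule.mem_sup_right (Submodule.smul_mem _ _ (Submodule.mem_map_of_mem hw')))
end

section
/- Let V be a vector space over a field F and let z: V → V be linear. Let S be a subspace of V and suppose that for every v ∈ V \ S there exists t_v ∈ F with z(v) − t_v v ∈ S. If v', v'' ∈ V are linearly independent modulo S, then t_{v'} = t_{v''} = t_{v'+v''}. Consequently, if the codimension of S in V is at least 2, there is a single scalar t ∈ F such that z(v) − t·v ∈ S for all v ∈ V. -/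
open Cardinal

lemma key_agree (F V : Type*) [Field F] [AddCommGroup V] [Module F V]
    (z : Module.End F V) (S : Submodule F V)
    (v' v'' : V) (t₁ t₂ t₃ : F)
    (hli : LinearIndependent F
      ![(Submodule.Quotient.mk v' : V ⧸ S), (Submodule.Quotient.mk v'' : V ⧸ S)])
    (h1 : z v' - t₁ • v' ∈ S) (h2 : z v'' - t₂ • v'' ∈ S)
    (h3 : z (v' + v'') - t₃ • (v' + v'') ∈ S) : t₁ = t₂ ∧ t₂ = t₃ := by
  have hmem : (t₁ - t₃) • v' + (t₂ - t₃) • v'' ∈ S := by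
    have := S.sub_mem (S.sub_mem h3 h1) h2
    convert this using 1
    simp only [map_add]
    module
  have hq : (t₁ - t₃) • (Submodule.Quotient.mk v' : V ⧸ S)
      + (t₂ - t₃) • (Submodule.Quotient.mk v'' : V ⧸ S) = 0 := by
    have : (Submodule.Quotient.mk ((t₁ - t₃) • v' + (t₂ - t₃) • v'') : V ⧸ S) = 0 :=
      (Submodule.Quotient.mk_eq_zero S).2 hmem
    simpa using this
  obtain ⟨e1, e2⟩ := (LinearIndependent.pair_iff.1 hli) _ _ hq
  exact ⟨by rw [sub_eq_zero.1 e1, sub_eq_zero.1 e2], sub_eq_zero.1 e2⟩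

/-- If `z v - t_v • v ∈ S` for every `v ∉ S`, then the scalars agree on vectors linearly
independent modulo `S`; hence if `S` has codimension at least `2`, there is a single scalar `t`
with `z v - t • v ∈ S` for all `v`. -/
theorem eigenvalue_constant_mod_subspace (F V : Type*) [Field F] [AddCommGroup V] [Module F V]
    (z : Module.End F V) (S : Submodule F V)
    (h : ∀ v : V, v ∉ S → ∃ t : F, z v - t • v ∈ S) :
    (∀ (v' v'' : V) (t₁ t₂ t₃ : F),
        LinearIndependent F
          ![(Submodule.Quotient.mk v' : V ⧸ S), (Submodule.Quotient.mk v'' : V ⧸ S)] →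
        z v' - t₁ • v' ∈ S → z v'' - t₂ • v'' ∈ S →
        z (v' + v'') - t₃ • (v' + v'') ∈ S → t₁ = t₂ ∧ t₂ = t₃) ∧
      (2 ≤ Module.rank F (V ⧸ S) → ∃ t : F, ∀ v : V, z v - t • v ∈ S) := by
  constructor
  · exact fun v' v'' t₁ t₂ t₃ hli h1 h2 h3 => key_agree F V z S v' v'' t₁ t₂ t₃ hli h1 h2 h3
  · intro hrank
    -- pick two vectors linearly independent mod `S`
    have h1lt : (1 : Cardinal) < Module.rank F (V ⧸ S) :=
      lt_of_lt_of_le (by norm_num) hrank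
    have hne : ∃ x : V ⧸ S, x ≠ 0 := by
      by_contra hc
      push_neg at hc
      have : Module.rank F (V ⧸ S) = 0 := by
        rw [rank_zero_iff_forall_zero]; exact hc
      rw [this] at h1lt; exact absurd h1lt (by norm_num)
    obtain ⟨x, hx⟩ := hne
    obtain ⟨y, hxy⟩ := exists_linearIndependent_pair_of_one_lt_rank h1lt hx
    obtain ⟨w, rfl⟩ := Submodule.Quotient.mk_surjective S x
    obtain ⟨u, rfl⟩ := Submodule.Quotient.mk_surjective S y
    have hwS : w ∉ S := fun hw => hx ((Submodule.Quotient.mk_eq_zero S).2 hw)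
    have huS : u ∉ S := fun hu =>
      hxy.ne_zero 1 (by simp [(Submodule.Quotient.mk_eq_zero S).2 hu])
    obtain ⟨t, ht⟩ := h w hwS
    refine ⟨t, fun v => ?_⟩
    -- key dichotomy: for v ∉ S, either (v,u) or (v,w) is independent mod S
    have main : ∀ v : V, v ∉ S →
        (LinearIndependent F
          ![(Submodule.Quotient.mk v : V ⧸ S), (Submodule.Quotient.mk w : V ⧸ S)] ∨
         LinearIndependent F
          ![(Submodule.Quotient.mk v : V ⧸ S), (Submodule.Quotient.mk u : V ⧸ S)]) := by
      intro v hv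
      by_contra hc
      push_neg at hc
      obtain ⟨hc1, hc2⟩ := hc
      have hvne : (Submodule.Quotient.mk v : V ⧸ S) ≠ 0 :=
        fun hv0 => hv ((Submodule.Quotient.mk_eq_zero S).1 hv0)
      rw [LinearIndependent.pair_iff' hvne] at hc1 hc2
      push_neg at hc1 hc2
      obtain ⟨a, ha⟩ := hc1
      obtain ⟨b, hb⟩ := hc2
      have := (LinearIndependent.pair_iff.1 hxy) b (-a)
        (by rw [← ha, ← hb]; module)
      exact huS ((Submodule.Quotient.mk_eq_zero S).1
        (by rw [← hb, this.1, zero_smul]))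
    -- t works for any v ∉ S
    have hall : ∀ v : V, v ∉ S → z v - t • v ∈ S := by
      intro v hv
      obtain ⟨s, hs⟩ := h v hv
      -- show s = t via independence with w or u
      have hst : s = t := by
        rcases main v hv with hli | hli
        · -- v, w independent
          rcases eq_or_ne (v + w) 0 with h0 | h0
          · exfalso
            have : (Submodule.Quotient.mk v : V ⧸ S) = -(Submodule.Quotient.mk w) := by
              have : v = -w := by linear_combination (norm := abel) h0
              simp [this]
            rw [LinearIndependent.pair_iff] at hli
            have := hli 1 1 (by rw [this]; simp)
            simp at this
          have hvw : v + w ∉ S := by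
            intro hmem
            have hq0 : (Submodule.Quotient.mk v : V ⧸ S) + Submodule.Quotient.mk w = 0 := by
              have : (Submodule.Quotient.mk (v + w) : V ⧸ S) = 0 :=
                (Submodule.Quotient.mk_eq_zero S).2 hmem
              simpa using this
            have := (LinearIndependent.pair_iff.1 hli) 1 1 (by simpa using hq0)
            simpa using this.1
          obtain ⟨r, hr⟩ := h (v + w) hvw
          exact (key_agree F V z S v w s t r hli hs ht hr).1
        · -- v, u independent; first get t_u
          obtain ⟨su, hsu⟩ := h u huS
          have htu : t = su := by
            rcases eq_or_ne (w + u) 0 with h0 | h0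
            · exfalso
              rw [LinearIndependent.pair_iff] at hxy
              have : (Submodule.Quotient.mk w : V ⧸ S) + Submodule.Quotient.mk u = 0 := by
                rw [← Submodule.Quotient.mk_add, h0, Submodule.Quotient.mk_zero]
              have := hxy 1 1 (by simpa using this)
              simp at this
            have hwu : w + u ∉ S := by
              intro hmem
              have hq0 : (Submodule.Quotient.mk w : V ⧸ S) + Submodule.Quotient.mk u = 0 := by
                have : (Submodule.Quotient.mk (w + u) : V ⧸ S) = 0 :=
                  (Submodule.Quotient.mk_eq_zero S).2 hmem
                simpa using this
              have := (LinearIndependent.pair_iff.1 hxy) 1 1 (by simpa using hq0)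
              simpa using this.1
            obtain ⟨r, hr⟩ := h (w + u) hwu
            exact (key_agree F V z S w u t su r hxy ht hsu hr).1
          have hvu : v + u ∉ S := by
            intro hmem
            have hq0 : (Submodule.Quotient.mk v : V ⧸ S) + Submodule.Quotient.mk u = 0 := by
              have : (Submodule.Quotient.mk (v + u) : V ⧸ S) = 0 :=
                (Submodule.Quotient.mk_eq_zero S).2 hmem
              simpa using this
            have := (LinearIndependent.pair_iff.1 hli) 1 1 (by simpa using hq0)
            simpa using this.1
          obtain ⟨r, hr⟩ := h (v + u) hvu
          have := (key_agree F V z S v u s su r hli hs hsu hr).1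
          rw [this, htu]
      rw [← hst]; exact hs
    by_cases hv : v ∈ S
    · -- v ∈ S : use v + w and w
      have hvw : v + w ∉ S := fun hmem => hwS (by simpa using S.sub_mem hmem hv)
      have h1 := hall (v + w) hvw
      have h2 := hall w hwS
      have : z v - t • v = (z (v + w) - t • (v + w)) - (z w - t • w) := by
        simp only [map_add]; module
      rw [this]
      exact S.sub_mem h1 h2
    · exact hall v hv
end

section
/- Let V be an infinite-dimensional vector space over a field F and let α be a cardinal with ℵ₀ < α ≤ dim_F V. Then the ideal I_α of gl(V) satisfies I_α = [I_α, I_α], i.e., every linear transformation of rank < α is a sum of commutators [φ, ψ] with φ, ψ ∈ I_α. -/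
/-! An endomorphism `φ` of rank `< α` lives on a subspace `W` of rank `< α`: it maps `V` into `W`
and kills a complement `Y` of `W`. Since `dim Y ≥ α > ℵ₀ · dim W`, the space `ℕ →₀ W` is a retract
of `V` whose `0`-th summand is `W`. On `ℕ →₀ W`, the map acting as `φ` on the `0`-th summand and
as `0` elsewhere is the commutator of the backward shift with `forward shift ∘ diag φ`, and
conjugating by the retraction keeps it a commutator. The conjugated operators factor through
`ℕ →₀ W`, so their rank is `< α`. -/

open Cardinal

variable (F V : Type*) [Field F] [AddCommGroup V] [Module F V]

/-- The ideal `I_α` of endomorphisms of rank `< α` (for an infinite cardinal `α`),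
as a subspace of `End F V`. -/
def rankIdeal (α : Cardinal) (hα : ℵ₀ ≤ α) : Submodule F (Module.End F V) where
  carrier := {φ | LinearMap.rank φ < α}
  zero_mem' := by
    simp only [Set.mem_setOf_eq, LinearMap.rank_zero]
    exact lt_of_lt_of_le aleph0_pos hα
  add_mem' := fun hf hg =>
    lt_of_le_of_lt (LinearMap.rank_add_le _ _) (Cardinal.add_lt_of_lt hα hf hg)
  smul_mem' := by
    intro c f hf
    have h1 : LinearMap.range (c • f) ≤ LinearMap.range f := by
      rintro x ⟨y, rfl⟩
      exact ⟨c • y, by simp⟩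
    exact lt_of_le_of_lt (Submodule.rank_mono h1) hf

namespace Finsupp

variable (R M : Type*) [Semiring R] [AddCommGroup M] [Module R M]

noncomputable def lshiftDown : Module.End R (ℕ →₀ M) := lcomapDomain Nat.succ Nat.succ_injective

noncomputable def lshiftUp : Module.End R (ℕ →₀ M) := lmapDomain M R Nat.succ

variable {R M}

@[simp]
theorem lshiftDown_apply (f : ℕ →₀ M) (n : ℕ) : lshiftDown R M f n = f (n + 1) := rfl

@[simp]
theorem lshiftUp_apply_zero (f : ℕ →₀ M) : lshiftUp R M f 0 = 0 :=
  mapDomain_of_notMem_range f 0 (by simp)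

@[simp]
theorem lshiftUp_apply_succ (f : ℕ →₀ M) (n : ℕ) : lshiftUp R M f (n + 1) = f n :=
  mapDomain_apply Nat.succ_injective f n

@[simp]
theorem lshiftDown_single_zero (m : M) : lshiftDown R M (single 0 m) = 0 :=
  Finsupp.ext fun n => by simp

theorem single_zero_add_lshiftUp_lshiftDown (f : ℕ →₀ M) :
    single 0 (f 0) + lshiftUp R M (lshiftDown R M f) = f :=
  Finsupp.ext fun n => by cases n <;> simp

theorem lshiftDown_mul_lshiftUp : lshiftDown R M * lshiftUp R M = 1 :=
  LinearMap.ext fun f => Finsupp.ext fun n => by simp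

theorem lshiftDown_mul_mapRange (d : Module.End R M) :
    lshiftDown R M * mapRange.linearMap d = mapRange.linearMap d * lshiftDown R M :=
  LinearMap.ext fun f => Finsupp.ext fun n => by simp

theorem commutator_lshiftDown_lshiftUp_mul_mapRange (d : Module.End R M) :
    lshiftDown R M * (lshiftUp R M * mapRange.linearMap d) -
        lshiftUp R M * mapRange.linearMap d * lshiftDown R M =
      lsingle 0 ∘ₗ d ∘ₗ lapply 0 := by
  have hsplit : lsingle 0 ∘ₗ lapply 0 + lshiftUp R M * lshiftDown R M = 1 :=
    LinearMap.ext single_zero_add_lshiftUp_lshiftDown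
  calc _ = (1 - lshiftUp R M * lshiftDown R M) * mapRange.linearMap d := by
        rw [← mul_assoc, lshiftDown_mul_lshiftUp, mul_assoc, ← lshiftDown_mul_mapRange, sub_mul,
          one_mul, mul_assoc]
    _ = lsingle 0 ∘ₗ lapply 0 ∘ₗ mapRange.linearMap d := by
        rw [← hsplit, add_sub_cancel_right]
        rfl
    _ = lsingle 0 ∘ₗ d ∘ₗ lapply 0 := LinearMap.ext fun f => by simp

end Finsupp

namespace LinearMap

theorem commutator_comp_comp {R M N : Type*} [Semiring R] [AddCommGroup M] [Module R M]
    [AddCommGroup N] [Module R N] {G : M →ₗ[R] N} {P : N →ₗ[R] M} (hPG : P ∘ₗ G = id)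
    (a b : Module.End R M) :
    (G ∘ₗ a ∘ₗ P) * (G ∘ₗ b ∘ₗ P) - (G ∘ₗ b ∘ₗ P) * (G ∘ₗ a ∘ₗ P) = G ∘ₗ (a * b - b * a) ∘ₗ P := by
  have hPG' (c : N →ₗ[R] M) : P ∘ₗ G ∘ₗ c = c := by rw [← comp_assoc, hPG, id_comp]
  simp only [Module.End.mul_eq_comp, comp_assoc, hPG', sub_comp, comp_sub]

variable {K E : Type*} [DivisionRing K] [AddCommGroup E] [Module K E]

theorem exists_isCompl_range_le_le_ker (φ : Module.End K E) :
    ∃ W Y : Submodule K E, IsCompl W Y ∧ range φ ≤ W ∧ Y ≤ ker φ ∧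
      Module.rank K W ≤ φ.rank + φ.rank := by
  obtain ⟨C, hC⟩ := (ker φ).exists_isCompl
  have hCφ : Module.rank K C = φ.rank :=
    ((Submodule.quotientEquivOfIsCompl _ _ hC).symm.trans φ.quotKerEquivRange).rank_eq
  obtain ⟨Y, hYφ, hY⟩ := (hC.codisjoint.mono_right (le_sup_left (b := range φ))).exists_isCompl
  refine ⟨C ⊔ range φ, Y, hY.symm, le_sup_right, hYφ, ?_⟩
  exact (Submodule.rank_add_le_rank_add_rank _ _).trans (by rw [hCφ])

theorem exists_eq_subtype_comp_comp_projectionOnto (φ : Module.End K E) {W Y : Submodule K E}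
    (h : IsCompl W Y) (hW : range φ ≤ W) (hY : Y ≤ ker φ) :
    ∃ d : Module.End K W, φ = W.subtype ∘ₗ d ∘ₗ W.projectionOnto Y h := by
  refine ⟨φ.restrict fun v _ => hW (mem_range_self φ v), LinearMap.ext fun v => ?_⟩
  conv_lhs => rw [← Submodule.projection_add_projection_eq_self h v]
  simpa using hY (Submodule.projection_apply_mem h.symm v)

end LinearMap

namespace Submodule

variable {K E : Type*} [DivisionRing K] [AddCommGroup E] [Module K E]

theorem le_rank_of_isCompl_of_rank_lt {W Y : Submodule K E} (h : IsCompl W Y) {α : Cardinal}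
    (hα : ℵ₀ ≤ α) (hαE : α ≤ Module.rank K E) (hW : Module.rank K W < α) :
    α ≤ Module.rank K Y := by
  by_contra! hY
  have hE : Module.rank K E = Module.rank K W + Module.rank K Y := by
    rw [← (prodEquivOfIsCompl W Y h).rank_eq, rank_prod']
  exact (hαE.trans_eq hE).not_gt (add_lt_of_lt hα hW hY)

open LinearMap Finsupp in
theorem exists_retraction_finsupp_nat {W Y : Submodule K E} (h : IsCompl W Y)
    (hWY : Module.rank K (ℕ →₀ W) ≤ Module.rank K Y) :
    ∃ (G : (ℕ →₀ W) →ₗ[K] E) (P : E →ₗ[K] ℕ →₀ W), P ∘ₗ G = LinearMap.id ∧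
      G ∘ₗ lsingle 0 = W.subtype ∧ lapply 0 ∘ₗ P = W.projectionOnto Y h := by
  obtain ⟨g, hg⟩ := rank_le_iff_exists_linearMap.mp hWY
  obtain ⟨π, hπg⟩ := g.exists_leftInverse_of_injective (ker_eq_bot.mpr hg)
  have hπg' : ∀ f, π (g f) = f := LinearMap.congr_fun hπg
  let e := W.prodEquivOfIsCompl Y h
  refine ⟨e.toLinearMap ∘ₗ (lapply 0).prod (g ∘ₗ lshiftDown K W),
    (lsingle 0 ∘ₗ LinearMap.fst K W Y + lshiftUp K W ∘ₗ π ∘ₗ LinearMap.snd K W Y) ∘ₗ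
      e.symm.toLinearMap, ?_, ?_, ?_⟩
  · exact LinearMap.ext fun f => by simp [e, hπg', single_zero_add_lshiftUp_lshiftDown]
  · ext w
    simp [e]
  · ext v
    simp [e]

end Submodule

variable {F V} in
theorem mul_mem_rankIdeal {α : Cardinal} {hα : ℵ₀ ≤ α} {φ : Module.End F V}
    (hφ : φ ∈ rankIdeal F V α hα) (ψ : Module.End F V) : φ * ψ ∈ rankIdeal F V α hα :=
  (LinearMap.rank_comp_le_left ψ φ).trans_lt hφ

/-- For `ℵ₀ < α ≤ dim V`, the ideal `I_α` is spanned by commutators of its elements. -/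
theorem rankIdeal_eq_commutator_span (α : Cardinal) (hα : ℵ₀ < α) (hα' : α ≤ Module.rank F V) :
    rankIdeal F V α hα.le =
      Submodule.span F {x : Module.End F V | ∃ φ ψ : Module.End F V,
        φ ∈ rankIdeal F V α hα.le ∧ ψ ∈ rankIdeal F V α hα.le ∧ x = φ * ψ - ψ * φ} := by
  refine le_antisymm (fun φ (hφ : LinearMap.rank φ < α) => ?_) (Submodule.span_le.mpr ?_)
  · obtain ⟨W, Y, hWY, hφW, hYφ, hW⟩ := φ.exists_isCompl_range_le_le_ker
    replace hW : Module.rank F W < α := hW.trans_lt (add_lt_of_lt hα.le hφ hφ)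
    have hM : Module.rank F (ℕ →₀ W) < α := by
      rw [rank_finsupp, mk_nat, lift_aleph0, lift_uzero]
      exact mul_lt_of_lt hα.le hα hW
    obtain ⟨G, P, hPG, hG, hP⟩ := Submodule.exists_retraction_finsupp_nat hWY
      (hM.le.trans (Submodule.le_rank_of_isCompl_of_rank_lt hWY hα.le hα' hW))
    obtain ⟨d, hd⟩ := φ.exists_eq_subtype_comp_comp_projectionOnto hWY hφW hYφ
    have hφ : φ = G ∘ₗ (Finsupp.lsingle 0 ∘ₗ d ∘ₗ Finsupp.lapply 0) ∘ₗ P := by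
      rw [hd, ← hG, ← hP]
      rfl
    rw [← Finsupp.commutator_lshiftDown_lshiftUp_mul_mapRange,
      ← LinearMap.commutator_comp_comp hPG] at hφ
    have hrank (a : Module.End F (ℕ →₀ W)) : G ∘ₗ a ∘ₗ P ∈ rankIdeal F V α hα.le :=
      (LinearMap.rank_comp_le_left _ G).trans_lt ((LinearMap.rank_le_domain G).trans_lt hM)
    exact Submodule.subset_span ⟨_, _, hrank _, hrank _, hφ⟩
  · rintro _ ⟨φ, ψ, hφ, hψ, rfl⟩
    exact sub_mem (mul_mem_rankIdeal hφ ψ) (mul_mem_rankIdeal hψ φ)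
end

section
/- Let V be an infinite-dimensional vector space over a field F. Then [I_{ℵ₀}, gl(V)] = [I_{ℵ₀}, I_{ℵ₀}]: the span of commutators of a finite-rank endomorphism with an arbitrary endomorphism equals the span of commutators of two finite-rank endomorphisms. -/
/-!
If `φ` has finite rank, choose finite-rank `p, q` with `p φ = φ = φ q` (a projection onto the
range of `φ`, and `q = s φ` for a linear section `s` of `φ` over its range). Then
`[φ, ψ] = [φ, qψp] + [p, φψ] + [q, ψφ]`, and every commutator on the right has two finite-rank
entries.
-/

open Cardinal

theorem commutator_eq_sum_commutators_of_mul_eq {R : Type*} [Ring R] {a p q : R}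
    (hp : p * a = a) (hq : a * q = a) (b : R) :
    a * b - b * a = (a * (q * b * p) - q * b * p * a) + (p * (a * b) - a * b * p)
      + (q * (b * a) - b * a * q) := by
  have h₁ : a * (q * b * p) = a * b * p := by rw [← mul_assoc, ← mul_assoc, hq]
  have h₂ : q * b * p * a = q * (b * a) := by rw [mul_assoc, hp, mul_assoc]
  have h₃ : p * (a * b) = a * b := by rw [← mul_assoc, hp]
  have h₄ : b * a * q = b * a := by rw [mul_assoc, hq]
  rw [h₁, h₂, h₃, h₄]
  abel

namespace LinearMap

variable {K V : Type*} [DivisionRing K] [AddCommGroup V] [Module K V]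

theorem exists_rank_le_mul_eq_self (φ : Module.End K V) :
    ∃ p : Module.End K V, rank p ≤ rank φ ∧ p * φ = φ := by
  obtain ⟨r, hr⟩ := (range φ).subtype.exists_leftInverse_of_injective (range φ).ker_subtype
  refine ⟨(range φ).subtype ∘ₗ r, ?_, ?_⟩
  · calc rank ((range φ).subtype ∘ₗ r) ≤ rank (range φ).subtype := rank_comp_le_left _ _
      _ = rank φ := by rw [rank, Submodule.range_subtype, rank]
  · ext v
    simpa using congr_arg Subtype.val (LinearMap.congr_fun hr (φ.rangeRestrict v))

theorem exists_rank_le_self_mul_eq (φ : Module.End K V) :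
    ∃ q : Module.End K V, rank q ≤ rank φ ∧ φ * q = φ := by
  obtain ⟨s, hs⟩ := φ.rangeRestrict.exists_rightInverse_of_surjective φ.range_rangeRestrict
  refine ⟨s ∘ₗ φ.rangeRestrict, ?_, ?_⟩
  · calc rank (s ∘ₗ φ.rangeRestrict) ≤ rank φ.rangeRestrict := rank_comp_le_right _ _
      _ = rank φ := by rw [rank, range_rangeRestrict, rank_top, rank]
  · ext v
    simpa using congr_arg Subtype.val (LinearMap.congr_fun hs (φ.rangeRestrict v))

end LinearMap

theorem commutator_span_finite_rank_general (F V : Type*) [Field F] [AddCommGroup V] [Module F V] :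
    Submodule.span F {x : Module.End F V | ∃ φ ψ : Module.End F V,
        LinearMap.rank φ < ℵ₀ ∧ x = φ * ψ - ψ * φ} =
      Submodule.span F {x : Module.End F V | ∃ φ ψ : Module.End F V,
        LinearMap.rank φ < ℵ₀ ∧ LinearMap.rank ψ < ℵ₀ ∧ x = φ * ψ - ψ * φ} := by
  refine le_antisymm (Submodule.span_le.mpr ?_) (Submodule.span_mono ?_)
  · rintro _ ⟨φ, ψ, hφ, rfl⟩
    obtain ⟨p, hp, hpφ⟩ := φ.exists_rank_le_mul_eq_self
    obtain ⟨q, hq, hφq⟩ := φ.exists_rank_le_self_mul_eq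
    have mem {a b : Module.End F V} (ha : LinearMap.rank a < ℵ₀) (hb : LinearMap.rank b < ℵ₀) :
        a * b - b * a ∈ Submodule.span F {x : Module.End F V | ∃ φ ψ : Module.End F V,
          LinearMap.rank φ < ℵ₀ ∧ LinearMap.rank ψ < ℵ₀ ∧ x = φ * ψ - ψ * φ} :=
      Submodule.subset_span ⟨a, b, ha, hb, rfl⟩
    rw [commutator_eq_sum_commutators_of_mul_eq hpφ hφq ψ]
    refine add_mem (add_mem (mem hφ ?_) (mem (hp.trans_lt hφ) ?_)) (mem (hq.trans_lt hφ) ?_)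
    · exact (LinearMap.rank_comp_le_right p (q * ψ)).trans_lt (hp.trans_lt hφ)
    · exact (LinearMap.rank_comp_le_left ψ φ).trans_lt hφ
    · exact (LinearMap.rank_comp_le_right φ ψ).trans_lt hφ
  · rintro _ ⟨φ, ψ, hφ, -, rfl⟩
    exact ⟨φ, ψ, hφ, rfl⟩

/-- `[I_{ℵ₀}, gl(V)] = [I_{ℵ₀}, I_{ℵ₀}]`: the span of commutators of a finite-rank endomorphism
with an arbitrary endomorphism equals the span of commutators of two finite-rank
endomorphisms. -/
theorem commutator_span_finite_rank (F V : Type*) [Field F] [AddCommGroup V] [Module F V]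
    (hV : ℵ₀ ≤ Module.rank F V) :
    Submodule.span F {x : Module.End F V | ∃ φ ψ : Module.End F V,
        LinearMap.rank φ < ℵ₀ ∧ x = φ * ψ - ψ * φ} =
      Submodule.span F {x : Module.End F V | ∃ φ ψ : Module.End F V,
        LinearMap.rank φ < ℵ₀ ∧ LinearMap.rank ψ < ℵ₀ ∧ x = φ * ψ - ψ * φ} :=
  commutator_span_finite_rank_general F V
end

section
/- Let A be an associative algebra over a field F of characteristic ≠ 2 and let U be an ideal of the Lie algebra A^(−) (i.e., [U, A] ⊆ U for the bracket [a,b] = ab − ba). Let id_A([U,U]) be the associative two-sided ideal of A generated by all commutators [u,u'] with u, u' ∈ U. Then [id_A([U,U]), A] ⊆ U. -/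
/-!
Let `N = {x : [A, x] ⊆ U}` be the normalizer of the Lie ideal `U`; it is a Lie ideal containing `U`.
As 2 is invertible, the identity `2[a, pq] = [qa + aq, p] + [pa + ap, q] + [a, [p, q]]` puts `UU` in `N`.
Then `[u, v]x = [u, vx] - v[u, x]` puts `[U, U]A` in `N`, and `x[u, v]y = ([u, v]y)x + [x, [u, v]y]`
puts `A[U, U]A` in `N`; since `N` is additively closed it contains `id_A([U, U])`.
-/

theorem TwoSidedIdeal.mem_of_mem_span_of_mul_mul_mem {R : Type*} [Ring R] {s : Set R}
    {G : AddSubgroup R} (hG : ∀ a b y, y ∈ s → a * y * b ∈ G) {z : R} (hz : z ∈ span s) :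
    z ∈ G := by
  rw [mem_span_iff_mem_addSubgroup_closure] at hz
  refine AddSubgroup.closure_le G |>.mpr ?_ hz
  rintro - ⟨-, ⟨a, -, y, hy, rfl⟩, b, -, rfl⟩
  exact hG a b y hy

section

attribute [local instance 100] LieRing.ofAssociativeRing

namespace LieIdeal

variable {R A : Type*} [CommRing R] [Ring A] [Algebra R A] (I : LieIdeal R A)

theorem mul_mem_normalizer (h2 : IsUnit (2 : R)) {p q : A} (hp : p ∈ I) (hq : q ∈ I) :
    p * q ∈ I.normalizer := by
  rw [LieSubmodule.mem_normalizer]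
  intro a
  have key : (2 : R) • ⁅a, p * q⁆ =
      ⁅q * a + a * q, p⁆ + ⁅p * a + a * p, q⁆ + ⁅a, ⁅p, q⁆⁆ := by
    simp only [Ring.lie_def, two_smul]
    noncomm_ring
  rw [← LieSubmodule.mem_toSubmodule, ← I.toSubmodule.smul_mem_iff_of_isUnit h2,
    LieSubmodule.mem_toSubmodule, key]
  exact add_mem (add_mem (lie_mem_right R A I _ _ hp) (lie_mem_right R A I _ _ hq))
    (lie_mem_right R A I _ _ (lie_mem_left R A I _ _ hp))

theorem lie_mul_mem_normalizer (h2 : IsUnit (2 : R)) {u v : A} (hu : u ∈ I) (hv : v ∈ I)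
    (x : A) : ⁅u, v⁆ * x ∈ I.normalizer := by
  have key : ⁅u, v⁆ * x = ⁅u, v * x⁆ - v * ⁅u, x⁆ := by
    simp only [Ring.lie_def]
    noncomm_ring
  rw [key]
  exact sub_mem (I.le_normalizer (lie_mem_left R A I _ _ hu))
    (mul_mem_normalizer I h2 hv (lie_mem_left R A I _ _ hu))

theorem mul_lie_mul_mem_normalizer (h2 : IsUnit (2 : R)) {u v : A} (hu : u ∈ I) (hv : v ∈ I)
    (x y : A) : x * ⁅u, v⁆ * y ∈ I.normalizer := by
  have key : x * ⁅u, v⁆ * y = ⁅u, v⁆ * (y * x) + ⁅x, ⁅u, v⁆ * y⁆ := by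
    simp only [Ring.lie_def]
    noncomm_ring
  have hky := lie_mul_mem_normalizer I h2 hu hv y
  rw [LieSubmodule.mem_normalizer] at hky
  rw [key]
  exact add_mem (lie_mul_mem_normalizer I h2 hu hv _) (I.le_normalizer (hky x))

theorem mem_normalizer_of_mem_span_lie (h2 : IsUnit (2 : R)) {x : A}
    (hx : x ∈ TwoSidedIdeal.span {y | ∃ u ∈ I, ∃ v ∈ I, y = ⁅u, v⁆}) : x ∈ I.normalizer := by
  refine TwoSidedIdeal.mem_of_mem_span_of_mul_mul_mem (G := I.normalizer.toAddSubgroup) ?_ hx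
  rintro b c - ⟨u, hu, v, hv, rfl⟩
  exact mul_lie_mul_mem_normalizer I h2 hu hv b c

end LieIdeal

end

/-- Alahmadi–Alsulami: if `U` is a Lie ideal of an associative algebra `A` over a field of
characteristic `≠ 2`, then `[id_A([U,U]), A] ⊆ U`. -/
theorem commutator_of_ideal_gen_subset (F A : Type*) [Field F] [Ring A] [Algebra F A]
    (h2 : (2 : F) ≠ 0) (U : Submodule F A) (hU : ∀ u ∈ U, ∀ a : A, u * a - a * u ∈ U) :
    ∀ x ∈ TwoSidedIdeal.span {y : A | ∃ u ∈ U, ∃ u' ∈ U, y = u * u' - u' * u},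
      ∀ a : A, x * a - a * x ∈ U := by
  let : LieRing A := LieRing.ofAssociativeRing
  obtain ⟨I, rfl⟩ : ∃ I : LieIdeal F A, I.toSubmodule = U :=
    ⟨{ U with lie_mem := fun {a u} hu => by simpa [Ring.lie_def] using U.neg_mem (hU u hu a) }, rfl⟩
  intro x hx a
  have hxN := LieIdeal.mem_normalizer_of_mem_span_lie I (Ne.isUnit h2) hx
  simpa [Ring.lie_def] using I.neg_mem ((I.mem_normalizer x).mp hxN a)
end

section
/- Let A be a unital prime associative algebra over a field of characteristic ≠ 2, and let U be a Lie ideal of A^(−) (i.e., [U, A] ⊆ U) satisfying [U, U] = (0). Then U is contained in the center of A. -/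
/-- Herstein: an abelian Lie ideal of a unital prime associative algebra over a field of
characteristic `≠ 2` lies in the center. -/
theorem abelian_lie_ideal_central (F A : Type*) [Field F] [Ring A] [Algebra F A]
    (h2 : (2 : F) ≠ 0) (hprime : ∀ a b : A, a ≠ 0 → b ≠ 0 → ∃ x : A, a * x * b ≠ 0)
    (U : Submodule F A) (hU : ∀ u ∈ U, ∀ a : A, u * a - a * u ∈ U)
    (habel : ∀ u ∈ U, ∀ u' ∈ U, u * u' = u' * u) :
    ∀ u ∈ U, ∀ a : A, u * a = a * u := by
  intro u hu a
  -- d b = u*b - b*u ; d² = 0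
  have hsq : ∀ b : A, u * (u * b - b * u) - (u * b - b * u) * u = 0 := by
    intro b
    exact sub_eq_zero.mpr (habel u hu _ (hU u hu b))
  -- d x * d y = 0
  have h1 : ∀ x y : A, (u * x - x * u) * (u * y - y * u) = 0 := by
    intro x y
    have key : (u * x - x * u) * (u * y - y * u) + (u * x - x * u) * (u * y - y * u)
        = (u * (u * (x * y) - (x * y) * u) - (u * (x * y) - (x * y) * u) * u)
          - (u * (u * x - x * u) - (u * x - x * u) * u) * y
          - x * (u * (u * y - y * u) - (u * y - y * u) * u) := by
      noncomm_ring
    rw [hsq (x * y), hsq x, hsq y] at key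
    simp only [zero_mul, mul_zero, zero_sub, neg_zero, sub_zero] at key
    have h3 : (2 : F) • ((u * x - x * u) * (u * y - y * u)) = 0 := by
      rw [two_smul]; exact key
    calc (u * x - x * u) * (u * y - y * u)
        = ((2 : F)⁻¹ * 2) • ((u * x - x * u) * (u * y - y * u)) := by
          rw [inv_mul_cancel₀ h2, one_smul]
      _ = (2 : F)⁻¹ • ((2 : F) • ((u * x - x * u) * (u * y - y * u))) := by
          rw [smul_smul]
      _ = 0 := by rw [h3, smul_zero]
  -- d x * y * d z = 0
  have h2' : ∀ x y z : A, (u * x - x * u) * y * (u * z - z * u) = 0 := by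
    intro x y z
    have h := h1 x (y * z)
    have hexp : (u * x - x * u) * (u * (y * z) - (y * z) * u)
        = (u * x - x * u) * (u * y - y * u) * z
          + (u * x - x * u) * y * (u * z - z * u) := by
      noncomm_ring
    rw [hexp, h1 x y, zero_mul, zero_add] at h
    exact h
  by_contra hne
  have hda : u * a - a * u ≠ 0 := sub_ne_zero_of_ne hne
  obtain ⟨x, hx⟩ := hprime _ _ hda hda
  exact hx (h2' a x a)
end

section
/- Let V be an infinite-dimensional vector space over a field F of characteristic ≠ 2 and let U be an ideal of the Lie algebra gl(V) such that the associative ideal of End_F(V) generated by [U,U] equals I_α for some infinite cardinal α ≤ dim_F V. Then [I_α, End_F(V)] ⊆ U ⊆ F·Id_V + I_α. -/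
open Cardinal

variable (F V : Type*) [Field F] [AddCommGroup V] [Module F V]

/-!
For a Lie ideal `U` of an associative ring `A`, Herstein's `T(U) = {x | [x, A] ⊆ U}` is a Lie ideal
containing every product `u v` and every `a [u, v] b` with `u, v ∈ U`; so the two-sided ideal
generated by `[U, U]`, here `I_α`, lies in `T(U)`, which is the first inclusion.

For the second, fix `u ∈ U` and write `δ = [u, -]`. Since `δ² x ∈ [U, U] ⊆ I_α`, the identity
`δ²(x y) = δ² x · y + 2 δ x · δ y + x · δ² y` and `2 ≠ 0` give `δ x · b · δ x ∈ I_α` for all `b`;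
as `End V` is von Neumann regular (`c = c b c` for some `b`), `δ x ∈ I_α`. Finally, an endomorphism
`a` all of whose commutators have rank `< α` is scalar modulo `I_α`: a maximal set of vectors `v`
for which all the `v, a v` are independent has fewer than `α` elements (otherwise some `x` has
`[a, x] = 1` on it), so outside a subspace `W` of rank `< α` each `a v` lies in `F v + W`, and `a`
then acts on `V / (W + a W)` as a scalar.
-/

section Herstein

variable {A : Type*} [Ring A]

/-- Herstein's `T(U)`. -/
def AddSubgroup.lieNormalizer (U : AddSubgroup A) : AddSubgroup A where
  carrier := {x | ∀ r, x * r - r * x ∈ U}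
  zero_mem' := by simp
  add_mem' {x y} hx hy r := by
    simpa only [add_mul, mul_add, add_sub_add_comm] using add_mem (hx r) (hy r)
  neg_mem' {x} hx r := by
    simpa only [neg_mul, mul_neg, neg_sub_neg, neg_sub] using neg_mem (hx r)

namespace AddSubgroup

variable {U : AddSubgroup A} (hU : ∀ u ∈ U, ∀ a, u * a - a * u ∈ U)
include hU

theorem commutator_mem_lieNormalizer {x : A} (hx : x ∈ U.lieNormalizer) (a : A) :
    x * a - a * x ∈ U.lieNormalizer := fun r => by
  convert add_mem (hx (a * r - r * a)) (hU _ (hx r) a) using 1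
  noncomm_ring

theorem mul_mem_lieNormalizer {u v : A} (hu : u ∈ U) (hv : v ∈ U) :
    u * v ∈ U.lieNormalizer := fun r => by
  convert add_mem (hU u hu (v * r)) (hU v hv (r * u)) using 1
  noncomm_ring

theorem mul_commutator_mul_mem_lieNormalizer {u v : A} (hu : u ∈ U) (hv : v ∈ U) (a b : A) :
    a * (u * v - v * u) * b ∈ U.lieNormalizer := by
  have hright : ∀ c, (u * v - v * u) * c ∈ U.lieNormalizer := fun c => by
    convert sub_mem (commutator_mem_lieNormalizer hU (hU u hu) (v * c))
      (mul_mem_lieNormalizer hU hv (hU u hu c)) using 1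
    noncomm_ring
  convert sub_mem (hright (b * a)) (commutator_mem_lieNormalizer hU (hright b) a) using 1
  noncomm_ring

theorem commutator_mem_of_mem_span_commutators {x : A}
    (hx : x ∈ TwoSidedIdeal.span {y | ∃ u ∈ U, ∃ v ∈ U, y = u * v - v * u}) (r : A) :
    x * r - r * x ∈ U := by
  suffices ∀ a b, a * x * b ∈ U.lieNormalizer by simpa using this 1 1 r
  induction hx using TwoSidedIdeal.span_induction with
  | mem y hy =>
    obtain ⟨u, hu, v, hv, rfl⟩ := hy
    exact mul_commutator_mul_mem_lieNormalizer hU hu hv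
  | zero => simp
  | add y z _ _ hy hz =>
    exact fun a b => by simpa only [mul_add, add_mul] using add_mem (hy a b) (hz a b)
  | neg y _ hy => exact fun a b => by simpa using neg_mem (hy a b)
  | left_absorb c y _ hy => exact fun a b => by simpa only [mul_assoc] using hy (a * c) b
  | right_absorb c y _ hy => exact fun a b => by simpa only [mul_assoc] using hy a (c * b)

end AddSubgroup

end Herstein

section Semiprime

variable {A : Type*} [Ring A] {J : TwoSidedIdeal A} {u : A}
  (hu : ∀ x, u * (u * x - x * u) - (u * x - x * u) * u ∈ J)
include hu

theorem commutator_mul_commutator_mem (h2 : IsUnit (2 : A)) (x y : A) :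
    (u * x - x * u) * (u * y - y * u) ∈ J := by
  have htwice : 2 * ((u * x - x * u) * (u * y - y * u)) ∈ J := by
    convert sub_mem (sub_mem (hu (x * y)) (J.mul_mem_right _ y (hu x)))
      (J.mul_mem_left x _ (hu y)) using 1
    noncomm_ring
  simpa [← mul_assoc] using J.mul_mem_left (↑h2.unit⁻¹) _ htwice

theorem commutator_mem_of_semiprime (h2 : IsUnit (2 : A))
    (hJ : ∀ c, (∀ b, c * b * c ∈ J) → c ∈ J) (x : A) : u * x - x * u ∈ J := by
  refine hJ _ fun b => ?_
  convert sub_mem (commutator_mul_commutator_mem hu h2 x (b * x))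
    (J.mul_mem_right _ x (commutator_mul_commutator_mem hu h2 x b)) using 1
  noncomm_ring

end Semiprime

section DivisionRing

variable {K M : Type*} [DivisionRing K] [AddCommGroup M] [Module K M]

theorem Module.End.exists_mul_mul_eq_self (c : Module.End K M) : ∃ b, c * b * c = c := by
  obtain ⟨s, hs⟩ := c.rangeRestrict.exists_rightInverse_of_surjective c.range_rangeRestrict
  obtain ⟨p, hp⟩ := (LinearMap.range c).subtype.exists_leftInverse_of_injective
    (LinearMap.range c).ker_subtype
  refine ⟨s ∘ₗ p, LinearMap.ext fun v => ?_⟩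
  have hpc : p (c v) = c.rangeRestrict v := LinearMap.congr_fun hp (c.rangeRestrict v)
  have hcs := congrArg Subtype.val (LinearMap.congr_fun hs (c.rangeRestrict v))
  simpa [hpc] using hcs

theorem LinearIndepOn.exists_linearMap_apply_eq {ι M' : Type*} [AddCommGroup M'] [Module K M']
    {f : ι → M} {S : Set ι} (hf : LinearIndepOn K f S) (g : ι → M') :
    ∃ x : M →ₗ[K] M', ∀ i ∈ S, x (f i) = g i := by
  obtain ⟨x, hx⟩ := LinearMap.exists_extend
    (Finsupp.linearCombination K (fun i : S => g i) ∘ₗ LinearIndependent.repr hf)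
  refine ⟨x, fun i hi => ?_⟩
  have := LinearMap.congr_fun hx ⟨f i, Submodule.subset_span ⟨⟨i, hi⟩, rfl⟩⟩
  simp only [LinearMap.comp_apply, Submodule.subtype_apply] at this
  rw [this, hf.repr_eq_single ⟨i, hi⟩ _ rfl]
  simp

end DivisionRing

namespace Module.End

open Set

variable {K M : Type*} [Field K] [AddCommGroup M] [Module K M]

theorem exists_range_sub_smul_le {a : Module.End K M} {W : Submodule K M}
    (h : ∀ v, a v ∈ K ∙ v ⊔ W) : ∃ c : K, LinearMap.range (a - c • 1) ≤ W := by
  have hWa : W ≤ W.comap a := fun w hw =>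
    sup_eq_right.2 ((Submodule.span_singleton_le_iff_mem _ _).2 hw) ▸ h w
  obtain ⟨c, hc⟩ := (W.mapQ W a hWa).exists_eq_smul_id_of_forall_notLinearIndependent fun q => by
    obtain ⟨v, rfl⟩ := W.mkQ_surjective q
    obtain ⟨_, hy, w, hw, hvw⟩ := Submodule.mem_sup.1 (h v)
    obtain ⟨d, rfl⟩ := Submodule.mem_span_singleton.1 hy
    have hq : W.mapQ W a hWa (W.mkQ v) = d • W.mkQ v := by
      rw [Submodule.mkQ_apply, Submodule.mapQ_apply, ← hvw, Submodule.Quotient.mk_add,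
        (Submodule.Quotient.mk_eq_zero W).2 hw, add_zero, Submodule.Quotient.mk_smul]
    rw [LinearIndependent.pair_iff]
    intro hind
    exact absurd (hind d (-1) (by rw [hq]; simp)).2 (by simp)
  refine ⟨c, ?_⟩
  rintro _ ⟨v, rfl⟩
  have := LinearMap.congr_fun hc (W.mkQ v)
  simp only [Submodule.mkQ_apply, Submodule.mapQ_apply, LinearMap.smul_apply, one_apply,
    ← Submodule.Quotient.mk_smul, Submodule.Quotient.eq] at this
  simpa using this

theorem exists_rank_sub_smul_lt_of_apply_mem {α : Cardinal} (hα : ℵ₀ ≤ α)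
    {a : Module.End K M} {W : Submodule K M} (hW : Module.rank K W < α)
    (h : ∀ v ∉ W, a v ∈ K ∙ v ⊔ W) : ∃ c : K, (a - c • 1).rank < α := by
  obtain ⟨c, hc⟩ := exists_range_sub_smul_le (a := a) (W := W ⊔ W.map a) fun v => by
    by_cases hv : v ∈ W
    · exact Submodule.mem_sup_right (Submodule.mem_sup_right (Submodule.mem_map_of_mem hv))
    · exact SetLike.le_def.1 (sup_le_sup_left le_sup_left _) (h v hv)
  refine ⟨c, (Submodule.rank_mono hc).trans_lt ?_⟩
  exact (Submodule.rank_add_le_rank_add_rank _ _).trans_lt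
    (add_lt_of_lt hα hW ((rank_map_le a W).trans_lt hW))

/-- `LinearIndepOn K a.withImage (s ×ˢ Set.univ)` says that the vectors `v` and `a v`, for `v ∈ s`,
are pairwise distinct and linearly independent. -/
def withImage (a : Module.End K M) (p : M × Bool) : M := cond p.2 (a p.1) p.1

theorem card_lt_of_linearIndepOn_withImage {α : Cardinal} {a : Module.End K M}
    (ha : ∀ x, (a * x - x * a).rank < α) {s : Set M}
    (hs : LinearIndepOn K a.withImage (s ×ˢ Set.univ)) : #s < α := by
  obtain ⟨x, hx⟩ := hs.exists_linearMap_apply_eq fun p => cond p.2 (-p.1) 0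
  have hfix : ∀ v ∈ s, (a * x - x * a) v = v := fun v hv => by
    have h0 := hx (v, false) ⟨hv, trivial⟩
    have h1 := hx (v, true) ⟨hv, trivial⟩
    simp only [withImage, cond_false, cond_true] at h0 h1
    simp [h0, h1]
  have hsid : LinearIndepOn K id s := by
    have himage : a.withImage '' (s ×ˢ {false}) = s := by ext; simp [withImage]
    simpa [himage] using (hs.mono (prod_mono subset_rfl (Set.subset_univ {false}))).id_image
  calc #s = Module.rank K (Submodule.span K s) := (rank_span_set hsid).symm
    _ ≤ (a * x - x * a).rank :=
      Submodule.rank_mono <| Submodule.span_le.2 fun v hv => ⟨v, hfix v hv⟩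
    _ < α := ha x

theorem exists_maximal_linearIndepOn_withImage (a : Module.End K M) :
    ∃ s, Maximal (fun s : Set M => LinearIndepOn K a.withImage (s ×ˢ Set.univ)) s :=
  zorn_subset {s | LinearIndepOn K a.withImage (s ×ˢ Set.univ)} fun c hc hchain => ⟨⋃₀ c, by
    show LinearIndepOn K a.withImage ((⋃₀ c) ×ˢ Set.univ)
    rw [sUnion_prod_const]
    exact linearIndepOn_sUnion_of_directed
      (hchain.directedOn.mono_comp fun _ _ hst => prod_mono hst subset_rfl)
      (forall_mem_image.2 fun _ hs => hc hs),
    fun _ => subset_sUnion_of_mem⟩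

theorem apply_mem_span_singleton_sup_of_maximal {a : Module.End K M} {s : Set M}
    (hs : Maximal (fun s : Set M => LinearIndepOn K a.withImage (s ×ˢ Set.univ)) s) {v : M}
    (hv : v ∉ Submodule.span K (a.withImage '' (s ×ˢ Set.univ))) :
    a v ∈ K ∙ v ⊔ Submodule.span K (a.withImage '' (s ×ˢ Set.univ)) := by
  by_contra hav
  have hins : LinearIndepOn K a.withImage (insert v s ×ˢ Set.univ) := by
    have := (hs.1.insert (x := (v, false)) hv).insert (x := (v, true)) ?_
    · refine this.mono ?_
      rintro ⟨w, _ | _⟩ ⟨hw, -⟩ <;> simp_all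
    · simpa [Submodule.span_insert, withImage, image_insert_eq] using hav
  exact hv (Submodule.subset_span
    ⟨(v, false), ⟨hs.2 hins (subset_insert v s) (mem_insert v s), trivial⟩, rfl⟩)

theorem exists_rank_sub_smul_lt {α : Cardinal} (hα : ℵ₀ ≤ α) {a : Module.End K M}
    (ha : ∀ x, (a * x - x * a).rank < α) : ∃ c : K, (a - c • 1).rank < α := by
  obtain ⟨s, hs⟩ := a.exists_maximal_linearIndepOn_withImage
  have hprod : #(s ×ˢ (Set.univ : Set Bool)) < α := by
    rw [mk_congr (Equiv.Set.prod _ _), mk_prod, lift_uzero]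
    exact mul_lt_of_lt hα (card_lt_of_linearIndepOn_withImage ha hs.1)
      ((lift_lt_aleph0.2 Set.finite_univ.lt_aleph0).trans_le hα)
  exact exists_rank_sub_smul_lt_of_apply_mem hα
    ((rank_span_le _).trans_lt (mk_image_le.trans_lt hprod))
    fun _ => apply_mem_span_singleton_sup_of_maximal hs

end Module.End

theorem lie_ideal_sandwich (h2 : (2 : F) ≠ 0)
    (α : Cardinal) (hα : ℵ₀ ≤ α)
    (U : Submodule F (Module.End F V))
    (hU : ∀ u ∈ U, ∀ a : Module.End F V, u * a - a * u ∈ U)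
    (hid : (TwoSidedIdeal.span {y : Module.End F V | ∃ u ∈ U, ∃ u' ∈ U, y = u * u' - u' * u} :
        Set (Module.End F V)) = {φ : Module.End F V | LinearMap.rank φ < α}) :
    Submodule.span F {x : Module.End F V | ∃ φ ψ : Module.End F V,
        LinearMap.rank φ < α ∧ x = φ * ψ - ψ * φ} ≤ U ∧
      U ≤ Submodule.span F {(1 : Module.End F V)} ⊔ rankIdeal F V α hα := by
  set J : TwoSidedIdeal (Module.End F V) :=
    TwoSidedIdeal.span {y | ∃ u ∈ U, ∃ u' ∈ U, y = u * u' - u' * u}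
  have hJ : ∀ φ, φ ∈ J ↔ φ.rank < α := fun φ => Set.ext_iff.1 hid φ
  refine ⟨Submodule.span_le.2 ?_, fun u hu => ?_⟩
  · rintro _ ⟨φ, ψ, hφ, rfl⟩
    exact AddSubgroup.commutator_mem_of_mem_span_commutators (U := U.toAddSubgroup) hU
      ((hJ φ).2 hφ) ψ
  · have htwo : IsUnit (2 : Module.End F V) := by
      simpa only [map_ofNat] using (isUnit_iff_ne_zero.2 h2).map (algebraMap F (Module.End F V))
    have hsemiprime : ∀ c, (∀ b, c * b * c ∈ J) → c ∈ J := fun c hc => by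
      obtain ⟨b, hb⟩ := Module.End.exists_mul_mul_eq_self c
      exact hb ▸ hc b
    have hδ : ∀ x, u * x - x * u ∈ J :=
      commutator_mem_of_semiprime (fun x => TwoSidedIdeal.subset_span ⟨u, hu, _, hU u hu x, rfl⟩)
        htwo hsemiprime
    obtain ⟨c, hc⟩ := Module.End.exists_rank_sub_smul_lt hα fun x => (hJ _).1 (hδ x)
    exact Submodule.mem_sup.2 ⟨c • 1, Submodule.smul_mem _ _ (Submodule.mem_span_singleton_self 1),
      u - c • 1, hc, add_sub_cancel _ _⟩
end

section
/- Let V be an infinite-dimensional vector space over a field F of characteristic ≠ 2. If U is an ideal of the Lie algebra gl(V) with [U, U] = (0), then U ⊆ F·Id_V; thus every abelian Lie ideal of gl(V) is either (0) or F·Id_V. -/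
open Cardinal

/-- A functional not vanishing at a nonzero vector. -/
lemma exists_dual_ne_zero' {F V : Type*} [Field F] [AddCommGroup V] [Module F V]
    {v : V} (hv : v ≠ 0) : ∃ f : Module.Dual F V, f v ≠ 0 := by
  by_contra h
  push_neg at h
  exact hv ((Module.forall_dual_apply_eq_zero_iff F v).mp h)

/-- `End F V` is a prime ring. -/
lemma end_prime' {F V : Type*} [Field F] [AddCommGroup V] [Module F V]
    {x : Module.End F V} (h : ∀ c : Module.End F V, x * c * x = 0) : x = 0 := by
  by_contra hx
  obtain ⟨v, hv⟩ : ∃ v, x v ≠ 0 := by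
    by_contra h'
    push_neg at h'
    exact hx (LinearMap.ext fun v => by simp [h' v])
  obtain ⟨f, hf⟩ := exists_dual_ne_zero' (F := F) hv
  have hzero := congrArg (fun g : Module.End F V => g v) (h (f.smulRight v))
  simp only [Module.End.mul_apply, LinearMap.smulRight_apply, LinearMap.zero_apply,
    map_smul] at hzero
  exact (smul_ne_zero hf hv) hzero

/-- Central endomorphisms are scalar. -/
lemma central_scalar' {F V : Type*} [Field F] [AddCommGroup V] [Module F V]
    [Nontrivial V] {u : Module.End F V}
    (h : ∀ a : Module.End F V, u * a = a * u) : ∃ c : F, u = c • 1 := by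
  obtain ⟨v, hv⟩ := exists_ne (0 : V)
  obtain ⟨f, hf⟩ := exists_dual_ne_zero' (F := F) hv
  refine ⟨(f v)⁻¹ * f (u v), LinearMap.ext fun w => ?_⟩
  have hc := congrArg (fun g : Module.End F V => g v) (h (f.smulRight w))
  simp only [Module.End.mul_apply, LinearMap.smulRight_apply, map_smul] at hc
  -- hc : u (f v • w) = f (u v) • w  (modulo direction)
  have : f v • u w = f (u v) • w := by
    simpa [map_smul] using hc
  have := congrArg (fun z => (f v)⁻¹ • z) this
  simp only [smul_smul, inv_mul_cancel₀ hf, one_smul] at this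
  simpa [LinearMap.smul_apply, Module.End.one_apply, smul_smul] using this

/-- Every abelian Lie ideal of `gl(V)` is contained in `F·Id`; hence it is `(0)` or `F·Id`. -/
theorem abelian_lie_ideal_of_gl (F V : Type*) [Field F] [AddCommGroup V] [Module F V]
    (h2 : (2 : F) ≠ 0) (hV : ℵ₀ ≤ Module.rank F V)
    (U : Submodule F (Module.End F V))
    (hU : ∀ u ∈ U, ∀ a : Module.End F V, u * a - a * u ∈ U)
    (habel : ∀ u ∈ U, ∀ u' ∈ U, u * u' = u' * u) :
    U ≤ Submodule.span F {(1 : Module.End F V)} := by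
  have hnt : Nontrivial V := by
    rw [← rank_pos_iff_nontrivial (R := F)]
    exact lt_of_lt_of_le (by simpa using aleph0_pos) hV
  intro u hu
  -- ad u squared is zero
  have hL : ∀ a : Module.End F V,
      u * (u * a - a * u) - (u * a - a * u) * u = 0 :=
    fun a => sub_eq_zero.mpr (habel u hu _ (hU u hu a))
  -- d a * d b = 0
  have hdd : ∀ a b : Module.End F V, (u * a - a * u) * (u * b - b * u) = 0 := by
    intro a b
    have e : (2 : F) • ((u * a - a * u) * (u * b - b * u))
        = (u * (u * (a * b) - (a * b) * u) - (u * (a * b) - (a * b) * u) * u)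
          - (u * (u * a - a * u) - (u * a - a * u) * u) * b
          - a * (u * (u * b - b * u) - (u * b - b * u) * u) := by
      rw [two_smul]
      noncomm_ring
    rw [hL (a * b), hL a, hL b] at e
    simp only [zero_mul, mul_zero, sub_zero, zero_sub, neg_zero] at e
    rcases smul_eq_zero.mp e with h | h
    · exact absurd h h2
    · exact h
  -- d a * c * d b = 0
  have hdcd : ∀ a c b : Module.End F V,
      (u * a - a * u) * c * (u * b - b * u) = 0 := by
    intro a c b
    have e : (u * a - a * u) * c * (u * b - b * u)
        = (u * (a * c) - (a * c) * u) * (u * b - b * u)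
          - a * ((u * c - c * u) * (u * b - b * u)) := by
      noncomm_ring
    rw [hdd (a * c) b, hdd c b] at e
    simpa using e
  -- primeness: d a = 0, so u is central
  have hcomm : ∀ a : Module.End F V, u * a = a * u := by
    intro a
    have := end_prime' (x := u * a - a * u) (fun c => hdcd a c a)
    exact sub_eq_zero.mp this
  obtain ⟨c, hc⟩ := central_scalar' hcomm
  rw [Submodule.mem_span_singleton]
  exact ⟨c, hc.symm⟩
end

section
/- Let V be an infinite-dimensional vector space over a field F. Then the subspace [I_{ℵ₀}, gl(V)] has codimension 2 in F·Id_V + I_{ℵ₀}. -/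
open Cardinal

variable (F V : Type*) [Field F] [AddCommGroup V] [Module F V]

/-!
Every finite-rank operator is a sum of rank-one operators `ξ.smulRight w` (`v ↦ ξ v • w`), and
modulo commutators each of them is `ξ w • P` for a fixed rank-one idempotent `P = η.smulRight u`
with `η u = 1`, since `[η.smulRight w, ξ.smulRight u] = ξ.smulRight w - ξ w • P`. Hence
`F·Id + I_{ℵ₀}` is spanned by `Id`, `P` and the commutators. Conversely `Id` and `P` are
independent modulo commutators: commutators have finite rank, which `Id` has not, and trace zero,
while `P` has trace one. Here the trace of a finite-rank operator is taken on its range; it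
satisfies `tr (ξ.smulRight w) = ξ w`, so `tr [ξ.smulRight w, ψ] = ξ (ψ w) - ξ (ψ w) = 0`.
-/

open LinearMap Submodule

section Rank

variable {K M : Type*} [Field K] [AddCommGroup M] [Module K M]

theorem rank_sup_quotient_of_disjoint {S C : Submodule K M} (h : Disjoint S C) :
    Module.rank K (↥(S ⊔ C) ⧸ comap (S ⊔ C).subtype C) = Module.rank K S := by
  rw [← (quotientInfEquivSupQuotient S C).rank_eq, ← comap_inf, h.eq_bot, comap_bot,
    ker_subtype, (quotEquivOfEqBot ⊥ rfl).rank_eq]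

theorem rank_span_pair_sup_quotient {C : Submodule K M} {x y : M}
    (h : ∀ s t : K, s • x + t • y ∈ C → s = 0 ∧ t = 0) :
    Module.rank K (↥(span K {x, y} ⊔ C) ⧸ comap (span K {x, y} ⊔ C).subtype C) = 2 := by
  have hdisj : Disjoint (span K {x, y}) C := by
    rw [disjoint_def]
    rintro _ hz hzC
    obtain ⟨s, t, rfl⟩ := mem_span_pair.1 hz
    obtain ⟨rfl, rfl⟩ := h s t hzC
    simp
  have hli : LinearIndependent K ![x, y] :=
    LinearIndependent.pair_iff.2 fun s t hst => h s t (hst ▸ C.zero_mem)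
  rw [rank_sup_quotient_of_disjoint hdisj, ← Matrix.range_cons_cons_empty x y ![],
    rank_span hli]
  simpa using Cardinal.mk_range_eq_of_injective hli.injective

end Rank

section FiniteRank

variable {F V}

def finiteRankCommutatorSpan : Submodule F (Module.End F V) :=
  span F {x | ∃ φ ψ : Module.End F V, rank φ < ℵ₀ ∧ x = φ * ψ - ψ * φ}

-- `LinearMap.trace` makes this `0` when `f` has infinite rank.
noncomputable def finiteRankTrace (f : Module.End F V) : F :=
  trace F (range f) (f.restrict fun x _ => mem_range_self f x)

theorem finiteRankTrace_eq_trace_restrict (f : Module.End F V) {U : Submodule F V}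
    [FiniteDimensional F U] (hU : range f ≤ U) :
    finiteRankTrace f = trace F U (f.restrict fun x _ => hU (mem_range_self f x)) := by
  have : FiniteDimensional F (range f) := Submodule.finiteDimensional_of_le hU
  let a : U →ₗ[F] range f := (f ∘ₗ U.subtype).codRestrict _ fun x => mem_range_self f _
  have hfU : f.restrict (fun x _ => hU (mem_range_self f x)) = inclusion hU ∘ₗ a := rfl
  have hfrange : f.restrict (fun x _ => mem_range_self f x) = a ∘ₗ inclusion hU := rfl
  rw [finiteRankTrace, hfU, hfrange, trace_comp_comm']

theorem finiteRankTrace_zero : finiteRankTrace (0 : Module.End F V) = 0 := by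
  rw [finiteRankTrace, ← map_zero (trace F (range (0 : Module.End F V)))]
  rfl

theorem finiteRankTrace_add {f g : Module.End F V} (hf : rank f < ℵ₀) (hg : rank g < ℵ₀) :
    finiteRankTrace (f + g) = finiteRankTrace f + finiteRankTrace g := by
  have := Module.rank_lt_aleph0_iff.mp hf
  have := Module.rank_lt_aleph0_iff.mp hg
  rw [finiteRankTrace_eq_trace_restrict f (le_sup_left : _ ≤ range f ⊔ range g),
    finiteRankTrace_eq_trace_restrict g (le_sup_right : _ ≤ range f ⊔ range g),
    finiteRankTrace_eq_trace_restrict (f + g) (range_add_le f g), ← map_add]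
  rfl

theorem finiteRankTrace_smul (c : F) {f : Module.End F V} (hf : rank f < ℵ₀) :
    finiteRankTrace (c • f) = c * finiteRankTrace f := by
  have := Module.rank_lt_aleph0_iff.mp hf
  rw [finiteRankTrace_eq_trace_restrict (c • f) (range_smul_le_range f c), finiteRankTrace,
    ← smul_eq_mul, ← map_smul]
  rfl

theorem finiteRankTrace_sub {f g : Module.End F V} (hf : rank f < ℵ₀) (hg : rank g < ℵ₀) :
    finiteRankTrace (f - g) = finiteRankTrace f - finiteRankTrace g := by
  rw [sub_eq_add_neg, ← neg_one_smul F g,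
    finiteRankTrace_add hf ((rankIdeal F V ℵ₀ le_rfl).smul_mem (-1) hg),
    finiteRankTrace_smul _ hg, neg_one_mul, ← sub_eq_add_neg]

theorem range_smulRight_le_span (ξ : Module.Dual F V) (w : V) :
    range (ξ.smulRight w) ≤ span F {w} := by
  rintro _ ⟨v, rfl⟩
  exact smul_mem _ _ (mem_span_singleton_self w)

theorem rank_smulRight_lt_aleph0 (ξ : Module.Dual F V) (w : V) :
    rank (ξ.smulRight w) < ℵ₀ :=
  (Submodule.rank_mono (range_smulRight_le_span ξ w)).trans_lt
    (Module.rank_lt_aleph0_iff.2 inferInstance)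

theorem finiteRankTrace_smulRight (ξ : Module.Dual F V) (w : V) :
    finiteRankTrace (ξ.smulRight w) = ξ w := by
  rw [finiteRankTrace_eq_trace_restrict _ (range_smulRight_le_span ξ w)]
  exact trace_smulRight (ξ ∘ₗ (span F {w}).subtype) ⟨w, mem_span_singleton_self w⟩

theorem mem_span_smulRight_of_rank_lt_aleph0 {f : Module.End F V} (hf : rank f < ℵ₀) :
    f ∈ span F (Set.range fun p : Module.Dual F V × V => p.1.smulRight p.2) := by
  have := Module.rank_lt_aleph0_iff.mp hf
  let b := Module.finBasis F (range f)
  have hsum : f = ∑ j, (b.coord j ∘ₗ f.rangeRestrict).smulRight (b j : V) := by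
    ext v
    calc f v = ((f.rangeRestrict v : range f) : V) := rfl
      _ = ((∑ j, b.repr (f.rangeRestrict v) j • b j : range f) : V) := by rw [b.sum_repr]
      _ = _ := by
        simp only [Submodule.coe_sum, Submodule.coe_smul, LinearMap.sum_apply, smulRight_apply,
          comp_apply, Module.Basis.coord_apply]
  rw [hsum]
  exact sum_mem fun j _ => subset_span ⟨(_, _), rfl⟩

def tracelessFiniteRank : Submodule F (Module.End F V) where
  carrier := {f | rank f < ℵ₀ ∧ finiteRankTrace f = 0}
  zero_mem' := ⟨(rankIdeal F V ℵ₀ le_rfl).zero_mem, finiteRankTrace_zero⟩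
  add_mem' := fun ⟨hf, hf0⟩ ⟨hg, hg0⟩ => ⟨(rankIdeal F V ℵ₀ le_rfl).add_mem hf hg,
    by rw [finiteRankTrace_add hf hg, hf0, hg0, add_zero]⟩
  smul_mem' := fun c _ ⟨hf, hf0⟩ => ⟨(rankIdeal F V ℵ₀ le_rfl).smul_mem c hf,
    by rw [finiteRankTrace_smul c hf, hf0, mul_zero]⟩

theorem commutator_mem_tracelessFiniteRank {φ : Module.End F V} (hφ : rank φ < ℵ₀)
    (ψ : Module.End F V) : φ * ψ - ψ * φ ∈ tracelessFiniteRank := by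
  let ad : Module.End F V →ₗ[F] Module.End F V := mulRight F ψ - mulLeft F ψ
  have hgen : span F (Set.range fun p : Module.Dual F V × V => p.1.smulRight p.2) ≤
      tracelessFiniteRank.comap ad := by
    refine span_le.2 (Set.range_subset_iff.2 fun ⟨ξ, w⟩ => ?_)
    have hξw : ad (ξ.smulRight w) = (ξ ∘ₗ ψ).smulRight w - ξ.smulRight (ψ w) := by
      ext v; simp [ad]
    show ad (ξ.smulRight w) ∈ tracelessFiniteRank
    rw [hξw]
    refine ⟨(rankIdeal F V ℵ₀ le_rfl).sub_mem (rank_smulRight_lt_aleph0 _ _)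
      (rank_smulRight_lt_aleph0 _ _), ?_⟩
    rw [finiteRankTrace_sub (rank_smulRight_lt_aleph0 _ _) (rank_smulRight_lt_aleph0 _ _),
      finiteRankTrace_smulRight, finiteRankTrace_smulRight, comp_apply, sub_self]
  exact hgen (mem_span_smulRight_of_rank_lt_aleph0 hφ)

theorem eq_zero_of_smul_one_mem_rankIdeal (hV : ℵ₀ ≤ Module.rank F V) {c : F}
    (hc : c • (1 : Module.End F V) ∈ rankIdeal F V ℵ₀ le_rfl) : c = 0 := by
  by_contra hc0
  have : LinearMap.rank (c • (1 : Module.End F V)) = Module.rank F V := by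
    rw [LinearMap.rank, range_smul _ _ hc0, Module.End.one_eq_id, range_id, rank_top]
  exact (hc.trans_le hV).ne this

theorem commutatorSpan_le_tracelessFiniteRank :
    (finiteRankCommutatorSpan : Submodule F (Module.End F V)) ≤ tracelessFiniteRank :=
  span_le.2 fun _ ⟨_, ψ, hφ, hx⟩ => hx ▸ commutator_mem_tracelessFiniteRank hφ ψ

theorem tracelessFiniteRank_le_rankIdeal :
    (tracelessFiniteRank : Submodule F (Module.End F V)) ≤ rankIdeal F V ℵ₀ le_rfl :=
  fun _ hf => hf.1

theorem rankIdeal_le_commutatorSpan_sup {u : V} {η : Module.Dual F V} (hηu : η u = 1) :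
    rankIdeal F V ℵ₀ le_rfl ≤ finiteRankCommutatorSpan ⊔ span F {η.smulRight u} := by
  intro f hf
  refine span_le.2 (Set.range_subset_iff.2 fun ⟨ξ, w⟩ => ?_)
    (mem_span_smulRight_of_rank_lt_aleph0 hf)
  have hcomm : η.smulRight w * ξ.smulRight u - ξ.smulRight u * η.smulRight w =
      ξ.smulRight w - ξ w • η.smulRight u := by
    ext v
    simp [hηu, smul_comm (η v)]
  show ξ.smulRight w ∈ _
  rw [← sub_add_cancel (ξ.smulRight w) (ξ w • η.smulRight u), ← hcomm]
  exact add_mem_sup (subset_span ⟨_, _, rank_smulRight_lt_aleph0 η w, rfl⟩)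
    (smul_mem _ _ (mem_span_singleton_self _))

theorem span_one_sup_rankIdeal_eq {u : V} {η : Module.Dual F V} (hηu : η u = 1) :
    span F {1} ⊔ rankIdeal F V ℵ₀ le_rfl =
      span F {1, η.smulRight u} ⊔ finiteRankCommutatorSpan := by
  rw [span_insert, sup_assoc, sup_comm (span F {η.smulRight u})]
  refine le_antisymm (sup_le_sup_left (rankIdeal_le_commutatorSpan_sup hηu) _)
    (sup_le_sup_left (sup_le ?_ ?_) _)
  · exact commutatorSpan_le_tracelessFiniteRank.trans tracelessFiniteRank_le_rankIdeal
  · exact (span_singleton_le_iff_mem _ _).2 (rank_smulRight_lt_aleph0 η u)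

theorem eq_zero_of_smul_one_add_smul_smulRight_mem (hV : ℵ₀ ≤ Module.rank F V) {u : V}
    {η : Module.Dual F V} (hηu : η u = 1) {s t : F}
    (h : s • 1 + t • η.smulRight u ∈ finiteRankCommutatorSpan) :
    s = 0 ∧ t = 0 := by
  have htraceless := commutatorSpan_le_tracelessFiniteRank h
  obtain rfl : s = 0 := by
    refine eq_zero_of_smul_one_mem_rankIdeal hV ?_
    simpa using (rankIdeal F V ℵ₀ le_rfl).sub_mem htraceless.1
      ((rankIdeal F V ℵ₀ le_rfl).smul_mem t (rank_smulRight_lt_aleph0 η u))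
  refine ⟨rfl, ?_⟩
  have htrace := htraceless.2
  rwa [zero_smul, zero_add, finiteRankTrace_smul t (rank_smulRight_lt_aleph0 η u),
    finiteRankTrace_smulRight, hηu, mul_one] at htrace

end FiniteRank

/-- `[I_{ℵ₀}, gl(V)]` has codimension `2` in `F·Id + I_{ℵ₀}`. -/
theorem codim_two (hV : ℵ₀ ≤ Module.rank F V) :
    Module.rank F
      (↥(Submodule.span F {(1 : Module.End F V)} ⊔ rankIdeal F V ℵ₀ le_rfl) ⧸
        Submodule.comap
          (Submodule.span F {(1 : Module.End F V)} ⊔ rankIdeal F V ℵ₀ le_rfl).subtype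
          (Submodule.span F {x : Module.End F V | ∃ φ ψ : Module.End F V,
            LinearMap.rank φ < ℵ₀ ∧ x = φ * ψ - ψ * φ})) = 2 := by
  obtain ⟨u, hu⟩ := rank_pos_iff_exists_ne_zero.mp (aleph0_pos.trans_le hV)
  obtain ⟨η, hηu⟩ := Module.Projective.exists_dual_eq_one F hu
  rw [span_one_sup_rankIdeal_eq hηu]
  exact rank_span_pair_sup_quotient fun s t => eq_zero_of_smul_one_add_smul_smulRight_mem hV hηu
end
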